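/- arXiv:1705.01302 — 10 statements merged into one kernel-verified Lean document; each statement's English description precedes it below -/
import Mathlib

section
/- Assume that for every control α ∈ A the map T ↦ E[S^α_T] is nondecreasing on [0,∞), and that there exists α̂ ∈ A for which the map T ↦ E[S^{α̂}_T] is constant on [0,∞). If α̃ ∈ A is any optimal control, i.e. E[∫₀^∞ e^{−ρs} f^{α̃}_s ds] = inf_{α∈A} E[∫₀^∞ e^{−ρs} f^α_s ds], then the map T ↦ E[S^{α̃}_T] is constant on [0,∞). -/
open MeasureTheory Filter

/-- mean martingale optimality principle, converse part.
Under the same setting and hypotheses as Statement 0 — the map `T ↦ E[S^α_T]`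
is nondecreasing on `[0,∞)` for every control `α`, and constant on `[0,∞)`
for some `α̂` — any optimal control `α̃` (i.e. one achieving
`E[∫₀^∞ e^{−ρs} f^{α̃}_s ds] = inf_α E[∫₀^∞ e^{−ρs} f^α_s ds]`) also makes
`T ↦ E[S^{α̃}_T]` constant on `[0,∞)`. -/
theorem stmt_1 {Ω : Type*} [MeasureSpace Ω] [IsProbabilityMeasure (volume : Measure Ω)]
    {A : Type*} [Nonempty A] (ρ : ℝ) (hρ : 0 < ρ)
    (f V : A → ℝ → Ω → ℝ) (v₀ : ℝ)
    (hf_int : ∀ α : A, Integrable (fun p : ℝ × Ω => Real.exp (-ρ * p.1) * f α p.1 p.2)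
      (((volume : Measure ℝ).restrict (Set.Ioi 0)).prod (volume : Measure Ω)))
    (hV_int : ∀ (α : A) (T : ℝ), Integrable (V α T) (volume : Measure Ω))
    (hV_lim : ∀ α : A,
      Tendsto (fun T : ℝ => ∫ ω, Real.exp (-ρ * T) * |V α T ω|) atTop (nhds 0))
    (hV0 : ∀ α : A, (∫ ω, V α 0 ω) = v₀)
    (S : A → ℝ → Ω → ℝ)
    (hS : ∀ (α : A) (T : ℝ) (ω : Ω), S α T ω =
      Real.exp (-ρ * T) * V α T ω + ∫ s in Set.Ioc (0 : ℝ) T, Real.exp (-ρ * s) * f α s ω)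
    (hmono : ∀ α : A, MonotoneOn (fun T : ℝ => ∫ ω, S α T ω) (Set.Ici 0))
    (αhat : A)
    (hconst : ∀ T ∈ Set.Ici (0 : ℝ), (∫ ω, S αhat T ω) = ∫ ω, S αhat 0 ω)
    -- α̃ is an optimal control
    (αtilde : A)
    (hopt : ∀ α : A,
      (∫ ω, ∫ s in Set.Ioi (0 : ℝ), Real.exp (-ρ * s) * f αtilde s ω) ≤
        ∫ ω, ∫ s in Set.Ioi (0 : ℝ), Real.exp (-ρ * s) * f α s ω) :
    ∀ T ∈ Set.Ici (0 : ℝ), (∫ ω, S αtilde T ω) = ∫ ω, S αtilde 0 ω := by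
  -- J α is the total expected discounted cost
  set J : A → ℝ := fun α => ∫ ω, ∫ s in Set.Ioi (0 : ℝ), Real.exp (-ρ * s) * f α s ω with hJdef
  -- value at 0
  have hS0 : ∀ α : A, (∫ ω, S α 0 ω) = v₀ := by
    intro α
    have : ∀ ω, S α 0 ω = V α 0 ω := by
      intro ω
      rw [hS]
      simp
    rw [show (fun ω => S α 0 ω) = fun ω => V α 0 ω from funext this]
    exact hV0 α
  -- key limit
  have key : ∀ α : A, Tendsto (fun T : ℝ => ∫ ω, S α T ω) atTop (nhds (J α)) := by
    intro α
    have hg := hf_int α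
    have hh : Integrable (fun s : ℝ => ∫ ω, Real.exp (-ρ * s) * f α s ω)
        ((volume : Measure ℝ).restrict (Set.Ioi 0)) := hg.integral_prod_left
    -- Fubini split for each T
    have split : ∀ T : ℝ, (∫ ω, S α T ω) =
        Real.exp (-ρ * T) * (∫ ω, V α T ω)
          + ∫ s in Set.Ioc (0 : ℝ) T, ∫ ω, Real.exp (-ρ * s) * f α s ω := by
      intro T
      have hres : Integrable (fun p : ℝ × Ω => Real.exp (-ρ * p.1) * f α p.1 p.2)
          (((volume : Measure ℝ).restrict (Set.Ioc 0 T)).prod (volume : Measure Ω)) := by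
        refine hg.mono_measure ?_
        have h1 : ((volume : Measure ℝ).restrict (Set.Ioc 0 T)).prod (volume : Measure Ω)
            = (((volume : Measure ℝ).restrict (Set.Ioi 0)).prod
                (volume : Measure Ω)).restrict (Set.Ioc 0 T ×ˢ Set.univ) := by
          rw [Measure.restrict_prod_eq_prod_univ, Measure.restrict_prod_eq_prod_univ]
          exact (Measure.restrict_restrict_of_subset
            (Set.prod_mono Set.Ioc_subset_Ioi_self subset_rfl)).symm
        rw [h1]
        exact Measure.restrict_le_self
      have h1 : Integrable (fun ω => Real.exp (-ρ * T) * V α T ω) (volume : Measure Ω) :=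
        (hV_int α T).const_mul _
      have h2 : Integrable (fun ω => ∫ s in Set.Ioc (0 : ℝ) T, Real.exp (-ρ * s) * f α s ω)
          (volume : Measure Ω) := hres.integral_prod_right
      have e1 : (∫ ω, S α T ω)
          = (∫ ω, Real.exp (-ρ * T) * V α T ω)
            + ∫ ω, ∫ s in Set.Ioc (0 : ℝ) T, Real.exp (-ρ * s) * f α s ω := by
        rw [← integral_add h1 h2]
        exact integral_congr_ae (Eventually.of_forall fun ω => hS α T ω)
      rw [e1, integral_const_mul]
      congr 1
      exact (integral_integral_swap hres).symm
    -- first summand tends to 0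
    have t1 : Tendsto (fun T : ℝ => Real.exp (-ρ * T) * (∫ ω, V α T ω)) atTop (nhds 0) := by
      apply squeeze_zero_norm _ (hV_lim α)
      intro T
      have heq : (∫ ω, Real.exp (-ρ * T) * |V α T ω|) = Real.exp (-ρ * T) * ∫ ω, |V α T ω| :=
        integral_const_mul _ _
      rw [heq, Real.norm_eq_abs, abs_mul, abs_of_pos (Real.exp_pos _)]
      gcongr
      simpa [Real.norm_eq_abs] using norm_integral_le_integral_norm (μ := (volume : Measure Ω)) (V α T)
    -- second summand tends to ∫ over Ioi 0
    have t2 : Tendsto (fun T : ℝ => ∫ s in Set.Ioc (0 : ℝ) T, ∫ ω, Real.exp (-ρ * s) * f α s ω)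
        atTop (nhds (∫ s in Set.Ioi (0 : ℝ), ∫ ω, Real.exp (-ρ * s) * f α s ω)) := by
      have := intervalIntegral_tendsto_integral_Ioi (μ := (volume : Measure ℝ)) 0 hh tendsto_id
      refine this.congr' ?_
      filter_upwards [eventually_ge_atTop (0 : ℝ)] with T hT
      simp only [id_eq]
      rw [intervalIntegral.integral_of_le hT]
    have hJ : J α = ∫ s in Set.Ioi (0 : ℝ), ∫ ω, Real.exp (-ρ * s) * f α s ω :=
      (integral_integral_swap hg).symm
    have := (t1.add t2)
    rw [zero_add] at this
    rw [hJ]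
    exact Tendsto.congr (fun T => (split T).symm) this
  -- J αhat = v₀
  have hJhat : J αhat = v₀ := by
    have h1 : Tendsto (fun T : ℝ => ∫ ω, S αhat T ω) atTop (nhds v₀) := by
      refine Tendsto.congr' ?_ tendsto_const_nhds
      filter_upwards [eventually_ge_atTop (0 : ℝ)] with T hT
      rw [hconst T hT, hS0 αhat]
    exact tendsto_nhds_unique (key αhat) h1
  -- E[S αtilde T] ≤ J αtilde for T ≥ 0
  intro T hT
  have hle1 : (∫ ω, S αtilde T ω) ≤ J αtilde := by
    refine ge_of_tendsto (key αtilde) ?_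
    filter_upwards [eventually_ge_atTop (max T 0)] with T' hT'
    exact hmono αtilde hT (le_trans (le_max_right T 0) hT') (le_trans (le_max_left T 0) hT')
  have hle2 : J αtilde ≤ v₀ := (hopt αhat).trans_eq hJhat
  have hge : v₀ ≤ ∫ ω, S αtilde T ω := by
    have h' : (∫ ω, S αtilde 0 ω) ≤ ∫ ω, S αtilde T ω := by
      simpa using hmono αtilde Set.self_mem_Ici hT hT
    rwa [hS0 αtilde] at h'
  rw [hS0 αtilde]
  linarith
end

section
/- For every measurable function g : [0,∞) → [0,∞) one has ∫₀^∞ e^{−ρt} (∫_t^∞ e^{−(ρ+κ)(s−t)} g(s) ds)² dt ≤ (1/((ρ+κ)κ)) · ∫₀^∞ e^{−ρs} g(s)² ds. -/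
/-!
Cauchy–Schwarz against the weight `e^{-(ρ+κ)(s-t)}` on `(t, ∞)`, whose total mass is `1/(ρ+κ)`,
bounds the inner square by `(1/(ρ+κ)) ∫_t^∞ e^{-(ρ+κ)(s-t)} g(s)² ds`. After exchanging the order
of integration, `e^{-ρt} e^{-(ρ+κ)(s-t)} = e^{-ρs} e^{-κ(s-t)}`, and the remaining inner integral
`∫_0^s e^{-κ(s-t)} dt` is at most `1/κ`.
-/

open MeasureTheory Set Function
open scoped ENNReal

theorem lintegral_mul_sq_le {α : Type*} [MeasurableSpace α] {μ : Measure α} {w f : α → ℝ≥0∞}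
    (hw : AEMeasurable w μ) (hf : AEMeasurable f μ) :
    (∫⁻ a, w a * f a ∂μ) ^ 2 ≤ (∫⁻ a, w a ∂μ) * ∫⁻ a, w a * f a ^ 2 ∂μ := by
  -- Hölder with exponents `1/2, 1/2` applied to `w` and `w * f ^ 2`.
  have sqrt_eq : ∀ x : ℝ≥0∞, x ^ (2⁻¹ : ℝ) = x ^ ((2 : ℕ) : ℝ)⁻¹ := by norm_num
  have holder := ENNReal.lintegral_mul_norm_pow_le hw (hw.mul (hf.pow_const 2))
    (p := 2⁻¹) (q := 2⁻¹) (by norm_num) (by norm_num) (by norm_num)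
  have hw_mul_sqrt : ∀ a, w a ^ (2⁻¹ : ℝ) * (w a * f a ^ 2) ^ (2⁻¹ : ℝ) = w a * f a := fun a => by
    rw [← ENNReal.mul_rpow_of_nonneg _ _ (by norm_num), ← mul_assoc, ← sq, ← mul_pow, sqrt_eq,
      ENNReal.pow_rpow_inv_natCast two_ne_zero]
  simp only [Pi.mul_apply, hw_mul_sqrt] at holder
  calc (∫⁻ a, w a * f a ∂μ) ^ 2
      ≤ ((∫⁻ a, w a ∂μ) ^ (2⁻¹ : ℝ) * (∫⁻ a, w a * f a ^ 2 ∂μ) ^ (2⁻¹ : ℝ)) ^ 2 := by gcongr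
    _ = (∫⁻ a, w a ∂μ) * ∫⁻ a, w a * f a ^ 2 ∂μ := by
      rw [mul_pow, sqrt_eq, sqrt_eq, ENNReal.rpow_inv_natCast_pow two_ne_zero,
        ENNReal.rpow_inv_natCast_pow two_ne_zero]

theorem lintegral_Ioi_exp_neg_mul_sub {c : ℝ} (hc : 0 < c) (t : ℝ) :
    ∫⁻ s in Ioi t, ENNReal.ofReal (Real.exp (-c * (s - t))) = ENNReal.ofReal (1 / c) := by
  have hsplit : ∀ s, Real.exp (-c * (s - t)) = Real.exp (c * t) * Real.exp (-c * s) := fun s => by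
    rw [← Real.exp_add]; ring_nf
  simp_rw [hsplit]
  rw [← ofReal_integral_eq_lintegral_ofReal
      ((integrableOn_exp_mul_Ioi (neg_lt_zero.2 hc) t).const_mul _)
      (ae_of_all _ fun s => by positivity),
    integral_const_mul, integral_exp_mul_Ioi (neg_lt_zero.2 hc), mul_div_assoc', mul_neg,
    neg_div_neg_eq, ← Real.exp_add]
  simp

theorem lintegral_Iic_exp_neg_mul_sub {c : ℝ} (hc : 0 < c) (s : ℝ) :
    ∫⁻ t in Iic s, ENNReal.ofReal (Real.exp (-c * (s - t))) = ENNReal.ofReal (1 / c) := by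
  have hsplit : ∀ t, Real.exp (-c * (s - t)) = Real.exp (-c * s) * Real.exp (c * t) := fun t => by
    rw [← Real.exp_add]; ring_nf
  simp_rw [hsplit]
  rw [← ofReal_integral_eq_lintegral_ofReal
      ((integrableOn_exp_mul_Iic hc s).const_mul _)
      (ae_of_all _ fun s => by positivity),
    integral_const_mul, integral_exp_mul_Iic hc, mul_div_assoc', ← Real.exp_add]
  simp

theorem lintegral_Ioi_lintegral_Ioi_swap {f : ℝ → ℝ → ℝ≥0∞} (hf : Measurable (uncurry f))
    (a : ℝ) :
    ∫⁻ x in Ioi a, ∫⁻ y in Ioi x, f x y = ∫⁻ y in Ioi a, ∫⁻ x in Ioo a y, f x y := by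
  set S : Set (ℝ × ℝ) := {p | a < p.1 ∧ p.1 < p.2}
  have hS : MeasurableSet S :=
    (measurableSet_lt measurable_const measurable_fst).inter
      (measurableSet_lt measurable_fst measurable_snd)
  have hx : ∀ x, (Ioi a).indicator (fun x => ∫⁻ y in Ioi x, f x y) x
      = ∫⁻ y, S.indicator (uncurry f) (x, y) := fun x => by
    by_cases hax : a < x
    · simp [S, indicator_apply, hax, ← lintegral_indicator measurableSet_Ioi]
    · simp [S, hax]
  have hy : ∀ y, (Ioi a).indicator (fun y => ∫⁻ x in Ioo a y, f x y) y
      = ∫⁻ x, S.indicator (uncurry f) (x, y) := fun y => by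
    by_cases hay : a < y
    · simp [S, indicator_apply, hay, ← lintegral_indicator measurableSet_Ioo]
    · have hyS : ∀ x, (x, y) ∉ S := fun x hx => hay (hx.1.trans hx.2)
      simp [hay, hyS]
  rw [← lintegral_indicator measurableSet_Ioi, ← lintegral_indicator measurableSet_Ioi]
  simp_rw [hx, hy]
  exact lintegral_lintegral_swap (hf.indicator hS).aemeasurable

theorem lintegral_Ioi_exp_mul_lintegral_Ioi_exp_le (ρ : ℝ) {κ : ℝ} (hκ : 0 < κ) {G : ℝ → ℝ≥0∞}
    (hG : Measurable G) :
    ∫⁻ t in Ioi 0, ENNReal.ofReal (Real.exp (-ρ * t)) *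
        ∫⁻ s in Ioi t, ENNReal.ofReal (Real.exp (-(ρ + κ) * (s - t))) * G s
      ≤ ENNReal.ofReal (1 / κ) * ∫⁻ s in Ioi 0, ENNReal.ofReal (Real.exp (-ρ * s)) * G s := by
  have hkernel : ∀ t s, ENNReal.ofReal (Real.exp (-ρ * t)) *
      (ENNReal.ofReal (Real.exp (-(ρ + κ) * (s - t))) * G s)
      = ENNReal.ofReal (Real.exp (-ρ * s)) * G s * ENNReal.ofReal (Real.exp (-κ * (s - t))) := by
    intro t s
    have hexp : -ρ * t + -(ρ + κ) * (s - t) = -ρ * s + -κ * (s - t) := by ring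
    rw [← mul_assoc, ← ENNReal.ofReal_mul (by positivity), ← Real.exp_add, hexp, Real.exp_add,
      ENNReal.ofReal_mul (by positivity)]
    ring
  have hmeas : Measurable (uncurry fun t s => ENNReal.ofReal (Real.exp (-ρ * s)) * G s *
      ENNReal.ofReal (Real.exp (-κ * (s - t)))) := by
    fun_prop
  calc ∫⁻ t in Ioi 0, ENNReal.ofReal (Real.exp (-ρ * t)) *
        ∫⁻ s in Ioi t, ENNReal.ofReal (Real.exp (-(ρ + κ) * (s - t))) * G s
      = ∫⁻ t in Ioi 0, ∫⁻ s in Ioi t,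
          ENNReal.ofReal (Real.exp (-ρ * s)) * G s * ENNReal.ofReal (Real.exp (-κ * (s - t))) := by
        simp_rw [← hkernel, lintegral_const_mul' _ _ ENNReal.ofReal_ne_top]
    _ = ∫⁻ s in Ioi 0, ENNReal.ofReal (Real.exp (-ρ * s)) * G s *
          ∫⁻ t in Ioo 0 s, ENNReal.ofReal (Real.exp (-κ * (s - t))) := by
        rw [lintegral_Ioi_lintegral_Ioi_swap hmeas]
        congr 1 with s
        exact lintegral_const_mul _ (by fun_prop)
    _ ≤ ∫⁻ s in Ioi 0, ENNReal.ofReal (Real.exp (-ρ * s)) * G s * ENNReal.ofReal (1 / κ) := by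
        gcongr with s
        rw [← lintegral_Iic_exp_neg_mul_sub hκ s]
        exact lintegral_mono_set (Ioo_subset_Iio_self.trans Iio_subset_Iic_self)
    _ = ENNReal.ofReal (1 / κ) * ∫⁻ s in Ioi 0, ENNReal.ofReal (Real.exp (-ρ * s)) * G s := by
        rw [lintegral_mul_const' _ _ ENNReal.ofReal_ne_top, mul_comm]

theorem stmt_4_general (ρ κ : ℝ) (hρ : 0 < ρ) (hκ : 0 < κ)
    (g : ℝ → ℝ) (hg_meas : Measurable g) :
    (∫⁻ t in Set.Ioi (0 : ℝ), ENNReal.ofReal (Real.exp (-ρ * t)) *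
        (∫⁻ s in Set.Ioi t,
          ENNReal.ofReal (Real.exp (-(ρ + κ) * (s - t))) * ENNReal.ofReal (g s)) ^ 2)
      ≤ ENNReal.ofReal (1 / ((ρ + κ) * κ)) *
        ∫⁻ s in Set.Ioi (0 : ℝ),
          ENNReal.ofReal (Real.exp (-ρ * s)) * ENNReal.ofReal (g s) ^ 2 := by
  have hρκ : 0 < ρ + κ := by linarith
  have cauchy_schwarz : ∀ t, (∫⁻ s in Ioi t,
      ENNReal.ofReal (Real.exp (-(ρ + κ) * (s - t))) * ENNReal.ofReal (g s)) ^ 2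
      ≤ ENNReal.ofReal (1 / (ρ + κ)) * ∫⁻ s in Ioi t,
          ENNReal.ofReal (Real.exp (-(ρ + κ) * (s - t))) * ENNReal.ofReal (g s) ^ 2 := fun t => by
    rw [← lintegral_Ioi_exp_neg_mul_sub hρκ t]
    exact lintegral_mul_sq_le (by fun_prop) (by fun_prop)
  calc _ ≤ ∫⁻ t in Ioi 0, ENNReal.ofReal (Real.exp (-ρ * t)) * (ENNReal.ofReal (1 / (ρ + κ)) *
          ∫⁻ s in Ioi t,
            ENNReal.ofReal (Real.exp (-(ρ + κ) * (s - t))) * ENNReal.ofReal (g s) ^ 2) := by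
        gcongr with t
        exact cauchy_schwarz t
    _ = ENNReal.ofReal (1 / (ρ + κ)) * ∫⁻ t in Ioi 0, ENNReal.ofReal (Real.exp (-ρ * t)) *
          ∫⁻ s in Ioi t,
            ENNReal.ofReal (Real.exp (-(ρ + κ) * (s - t))) * ENNReal.ofReal (g s) ^ 2 := by
        rw [← lintegral_const_mul' _ _ ENNReal.ofReal_ne_top]
        simp only [mul_left_comm]
    _ ≤ ENNReal.ofReal (1 / (ρ + κ)) * (ENNReal.ofReal (1 / κ) * ∫⁻ s in Ioi 0,
          ENNReal.ofReal (Real.exp (-ρ * s)) * ENNReal.ofReal (g s) ^ 2) := by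
        gcongr
        exact lintegral_Ioi_exp_mul_lintegral_Ioi_exp_le ρ hκ (by fun_prop)
    _ = _ := by
        rw [← mul_assoc, ← ENNReal.ofReal_mul (by positivity), one_div_mul_one_div]

/-- for `ρ, κ > 0` and any measurable `g : [0,∞) → [0,∞)`,
`∫₀^∞ e^{−ρt} (∫_t^∞ e^{−(ρ+κ)(s−t)} g(s) ds)² dt
  ≤ (1/((ρ+κ)κ)) · ∫₀^∞ e^{−ρs} g(s)² ds`. -/
theorem stmt_4 (ρ κ : ℝ) (hρ : 0 < ρ) (hκ : 0 < κ)
    (g : ℝ → ℝ) (hg_meas : Measurable g) (hg_nonneg : ∀ s, 0 ≤ g s) :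
    (∫⁻ t in Set.Ioi (0 : ℝ), ENNReal.ofReal (Real.exp (-ρ * t)) *
        (∫⁻ s in Set.Ioi t,
          ENNReal.ofReal (Real.exp (-(ρ + κ) * (s - t))) * ENNReal.ofReal (g s)) ^ 2)
      ≤ ENNReal.ofReal (1 / ((ρ + κ) * κ)) *
        ∫⁻ s in Set.Ioi (0 : ℝ),
          ENNReal.ofReal (Real.exp (-ρ * s)) * ENNReal.ofReal (g s) ^ 2 :=
  stmt_4_general ρ κ hρ hκ g hg_meas
end

section
/- If f : [0,∞) → ℝ is a bounded measurable function with lim_{t→∞} f(t) = L, then lim_{t→∞} ∫₀^t e^{−α(t−s)} (∫_s^∞ e^{−β(u−s)} f(u) du) ds = L/(αβ). -/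
open MeasureTheory Filter

open Set

private lemma int_exp_aux (b : ℝ) (hb : 0 < b) :
    ∫ x in Set.Ioi (0:ℝ), Real.exp (-b*x) = 1/b := by
  have := integral_comp_mul_left_Ioi (fun x => Real.exp (-x)) 0 hb
  simp only [mul_zero, integral_exp_neg_Ioi, neg_zero, Real.exp_zero, smul_eq_mul, mul_one] at this
  rw [one_div, ← this]
  congr 1; ext x; ring_nf

private lemma key_aux (b : ℝ) (hb : 0 < b) (g : ℝ → ℝ) (hg : Measurable g)
    (M : ℝ) (hM : ∀ t, |g t| ≤ M) (L : ℝ) (hL : Tendsto g atTop (nhds L)) :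
    Tendsto (fun s : ℝ => ∫ u in Set.Ioi (0:ℝ), Real.exp (-b*u) * g (u + s))
      atTop (nhds (L / b)) := by
  have hlim : (∫ u in Set.Ioi (0:ℝ), Real.exp (-b*u) * L) = L / b := by
    rw [integral_mul_const, int_exp_aux b hb]; ring
  rw [← hlim]
  apply tendsto_integral_filter_of_dominated_convergence (fun u => M * Real.exp (-b*u))
  · filter_upwards with s
    exact ((Real.measurable_exp.comp (measurable_id.const_mul (-b))).mul
      (hg.comp (measurable_id.add_const s))).aestronglyMeasurable
  · filter_upwards with s
    filter_upwards with u
    rw [Real.norm_eq_abs, abs_mul, abs_of_pos (Real.exp_pos _), mul_comm M]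
    exact mul_le_mul_of_nonneg_left (hM _) (Real.exp_pos _).le
  · exact ((exp_neg_integrableOn_Ioi 0 hb).const_mul M)
  · filter_upwards with u
    exact Tendsto.const_mul _ (hL.comp (tendsto_atTop_add_const_left atTop u tendsto_id))

/-- for `α, β > 0` and a bounded measurable `f : [0,∞) → ℝ` with
`f(t) → L` as `t → ∞`, one has
`∫₀^t e^{−α(t−s)} (∫_s^∞ e^{−β(u−s)} f(u) du) ds → L/(αβ)` as `t → ∞`. -/
theorem stmt_5 (α β : ℝ) (hα : 0 < α) (hβ : 0 < β)
    (f : ℝ → ℝ) (hf_meas : Measurable f) (hf_bdd : ∃ M : ℝ, ∀ t, |f t| ≤ M)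
    (L : ℝ) (hf_lim : Tendsto f atTop (nhds L)) :
    Tendsto (fun t : ℝ =>
        ∫ s in Set.Ioc (0 : ℝ) t, Real.exp (-α * (t - s)) *
          ∫ u in Set.Ioi s, Real.exp (-β * (u - s)) * f u)
      atTop (nhds (L / (α * β))) := by
  obtain ⟨M, hM⟩ := hf_bdd
  have hM0 : 0 ≤ M := le_trans (abs_nonneg _) (hM 0)
  set G : ℝ → ℝ := fun s => ∫ u in Set.Ioi (0:ℝ), Real.exp (-β*u) * f (u + s) with hGdef
  -- rewrite inner integral
  have hG : ∀ s : ℝ, (∫ u in Set.Ioi s, Real.exp (-β * (u - s)) * f u) = G s := by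
    intro s
    show _ = ∫ u in Set.Ioi (0:ℝ), Real.exp (-β*u) * f (u + s)
    rw [← integral_indicator measurableSet_Ioi, ← integral_indicator measurableSet_Ioi,
      ← integral_add_right_eq_self
        (fun u => (Set.Ioi s).indicator (fun u => Real.exp (-β*(u - s)) * f u) u) s]
    congr 1
    ext u
    by_cases h : 0 < u
    · simp [Set.indicator_apply, Set.mem_Ioi, h, add_sub_cancel_right]
    · simp [Set.indicator_apply, Set.mem_Ioi, h]
  -- G is measurable
  have hGmeas : Measurable G := by
    have : Measurable (Function.uncurry fun s u => Real.exp (-β*u) * f (u + s)) := by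
      exact (Real.measurable_exp.comp (measurable_snd.const_mul (-β))).mul
        (hf_meas.comp (measurable_snd.add measurable_fst))
    exact (StronglyMeasurable.integral_prod_right this.stronglyMeasurable).measurable
  -- G is bounded by M / β
  have hGbdd : ∀ s, |G s| ≤ M / β := by
    intro s
    have h1 : ‖∫ u in Set.Ioi (0:ℝ), Real.exp (-β*u) * f (u + s)‖
        ≤ ∫ u in Set.Ioi (0:ℝ), M * Real.exp (-β*u) := by
      apply norm_integral_le_of_norm_le ((exp_neg_integrableOn_Ioi 0 hβ).const_mul M)
      filter_upwards with u
      rw [Real.norm_eq_abs, abs_mul, abs_of_pos (Real.exp_pos _), mul_comm M]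
      exact mul_le_mul_of_nonneg_left (hM _) (Real.exp_pos _).le
    rw [integral_const_mul, int_exp_aux β hβ] at h1
    calc |G s| ≤ M * (1/β) := h1
    _ = M / β := by ring
  -- G tends to L / β
  have hGlim : Tendsto G atTop (nhds (L / β)) := key_aux β hβ f hf_meas M hM L hf_lim
  -- rewrite the outer integral
  have houter : ∀ t : ℝ, (∫ s in Set.Ioc (0 : ℝ) t, Real.exp (-α * (t - s)) * G s)
      = ∫ v, (Set.Ico (0:ℝ) t).indicator (fun v => Real.exp (-α*v) * G (t - v)) v := by
    intro t
    rw [← integral_indicator measurableSet_Ioc,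
      ← integral_sub_left_eq_self
        (fun s => (Set.Ioc (0:ℝ) t).indicator (fun s => Real.exp (-α * (t - s)) * G s) s)
        volume t]
    congr 1
    ext v
    by_cases h : v ∈ Set.Ico (0:ℝ) t
    · have h2 : t - v ∈ Set.Ioc (0:ℝ) t := by
        constructor
        · linarith [h.2]
        · linarith [h.1]
      simp only [Set.indicator_of_mem h2, Set.indicator_of_mem h, sub_sub_cancel]
    · have h2 : t - v ∉ Set.Ioc (0:ℝ) t := by
        simp only [Set.mem_Ico, not_and_or, not_le, not_lt] at h
        simp only [Set.mem_Ioc, not_and_or, not_le, not_lt]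
        rcases h with h | h
        · right; linarith
        · left; linarith
      simp only [Set.indicator_of_notMem h2, Set.indicator_of_notMem h]
  -- final DCT
  have hfinal : Tendsto
      (fun t : ℝ => ∫ v, (Set.Ico (0:ℝ) t).indicator (fun v => Real.exp (-α*v) * G (t - v)) v)
      atTop (nhds (∫ v, (Set.Ici (0:ℝ)).indicator (fun v => Real.exp (-α*v) * (L/β)) v)) := by
    apply tendsto_integral_filter_of_dominated_convergence
      (fun v => (Set.Ici (0:ℝ)).indicator (fun v => (M/β) * Real.exp (-α*v)) v)
    · filter_upwards with t
      exact (((Real.measurable_exp.comp (measurable_id.const_mul (-α))).mul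
        (hGmeas.comp (measurable_const.sub measurable_id))).indicator
        measurableSet_Ico).aestronglyMeasurable
    · filter_upwards with t
      filter_upwards with v
      by_cases h : v ∈ Set.Ico (0:ℝ) t
      · rw [Set.indicator_of_mem h, Set.indicator_of_mem (Set.mem_Ici.mpr h.1),
          Real.norm_eq_abs, abs_mul, abs_of_pos (Real.exp_pos _), mul_comm (M/β)]
        exact mul_le_mul_of_nonneg_left (hGbdd _) (Real.exp_pos _).le
      · rw [Set.indicator_of_notMem h, norm_zero]
        apply Set.indicator_nonneg
        intro v _
        positivity
    · rw [integrable_indicator_iff measurableSet_Ici]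
      rw [IntegrableOn, Measure.restrict_congr_set Ioi_ae_eq_Ici.symm]
      exact (exp_neg_integrableOn_Ioi 0 hα).const_mul (M/β)
    · filter_upwards with v
      by_cases h : 0 ≤ v
      · rw [Set.indicator_of_mem (Set.mem_Ici.mpr h)]
        apply Tendsto.congr' ((eventually_gt_atTop v).mono fun t ht => ?_)
          (Tendsto.const_mul _ (hGlim.comp (by
            have : Tendsto (fun t : ℝ => t + (-v)) atTop atTop :=
              tendsto_atTop_add_const_right atTop (-v) tendsto_id
            simpa [sub_eq_add_neg] using this)))
        rw [Set.indicator_of_mem (Set.mem_Ico.mpr ⟨h, ht⟩)]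
        simp [Function.comp, sub_eq_add_neg]
      · rw [Set.indicator_of_notMem (by simpa using h)]
        apply Tendsto.congr' (Eventually.of_forall fun t => ?_) tendsto_const_nhds
        rw [Set.indicator_of_notMem (by simp [Set.mem_Ico]; intro hv; linarith)]
  -- compute the limit value
  have hval : (∫ v, (Set.Ici (0:ℝ)).indicator (fun v => Real.exp (-α*v) * (L/β)) v)
      = L / (α * β) := by
    rw [integral_indicator measurableSet_Ici,
      Measure.restrict_congr_set Ioi_ae_eq_Ici.symm, integral_mul_const, int_exp_aux α hα]
    field_simp
  rw [← hval]
  apply hfinal.congr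
  intro t
  rw [← houter t]
  congr 1
  ext s
  rw [hG s]
end

section
/- If p : [0,∞) → ℝ is a bounded measurable function with lim_{t→∞} p(t) = P̄, then the mean optimal distributed generation m(t) := x₀·e^{−at} + (b²/(2γ))·∫₀^t e^{−a(t−s)} (∫_s^∞ e^{−(ρ+a)(u−s)} p(u) du) ds + ((θ − ρc/b)/(2Λ_c(ρ + a)))·(1 − e^{−at}) converges as t → ∞ to the stationary level X̂_∞(P̄) := (P̄ + θ − ρc/b)/(2σ²K_c); in particular the corresponding mean installation rate (1/b)·m'(t) tends to zero. -/
/-!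
The price enters `m` only through `g(s) = ∫_s^∞ e^{-(ρ+a)(u-s)} p(u) du`. After the shift
`u = s + v` this is an average of `p(s + ·)` against an exponential weight, so by dominated
convergence `g` is bounded, continuous and tends to `P̄/(ρ+a)`. The same argument, after the
substitution `s = t - r`, shows that `F(t) = ∫_0^t e^{-a(t-s)} g(s) ds` tends to `P̄/((ρ+a)a)`;
since `F' = g - aF`, also `m' → 0`. The limit of `m` is identified by the root identities
`γ a (ρ+a) = b²σ²K_c` and `Λ_c (ρ+a) = σ²K_c`.
-/

open MeasureTheory Filter Set Real Topology

noncomputable def posRoot (ρ D : ℝ) : ℝ := (-ρ + √(ρ ^ 2 + 4 * D)) / 2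

lemma posRoot_pos (ρ : ℝ) {D : ℝ} (hD : 0 < D) : 0 < posRoot ρ D := by
  have : ρ < √(ρ ^ 2 + 4 * D) := lt_sqrt_of_sq_lt (by linarith)
  rw [posRoot]
  linarith

lemma posRoot_mul_add_self (ρ : ℝ) {D : ℝ} (hD : 0 ≤ D) :
    posRoot ρ D * (ρ + posRoot ρ D) = D := by
  have : √(ρ ^ 2 + 4 * D) ^ 2 = ρ ^ 2 + 4 * D := sq_sqrt (by positivity)
  rw [posRoot]
  linear_combination this / 4

lemma riccati_roots_spec {ρ σ b γ η Kc Λc a : ℝ} (hσ : σ ≠ 0) (hb : b ≠ 0)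
    (hγ : 0 < γ) (hη : 0 < η)
    (hKc : Kc = (γ / (2 * b ^ 2)) *
      (-(ρ - σ ^ 2) + √((ρ - σ ^ 2) ^ 2 + 4 * b ^ 2 * η / γ)))
    (hΛc : Λc = (γ / (2 * b ^ 2)) * (-ρ + √(ρ ^ 2 + 4 * b ^ 2 * σ ^ 2 * Kc / γ)))
    (ha : a = b ^ 2 * Λc / γ) :
    0 < Kc ∧ 0 < a ∧ 0 < ρ + a ∧ γ * (a * (ρ + a)) = b ^ 2 * σ ^ 2 * Kc ∧
      Λc * (ρ + a) = σ ^ 2 * Kc := by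
  have hKc_pos : 0 < Kc := by
    rw [show Kc = γ / b ^ 2 * posRoot (ρ - σ ^ 2) (b ^ 2 * η / γ) by
      rw [hKc, posRoot]; ring_nf]
    exact mul_pos (by positivity) (posRoot_pos _ (by positivity))
  have ha_root : a = posRoot ρ (b ^ 2 * σ ^ 2 * Kc / γ) := by
    rw [ha, hΛc, posRoot]; field_simp
  have ha_pos : 0 < a := ha_root ▸ posRoot_pos _ (by positivity)
  have ha_mul : a * (ρ + a) = b ^ 2 * σ ^ 2 * Kc / γ :=
    ha_root ▸ posRoot_mul_add_self _ (by positivity)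
  refine ⟨hKc_pos, ha_pos, (pos_iff_pos_of_mul_pos (ha_mul ▸ by positivity)).1 ha_pos,
    by rw [ha_mul]; field_simp, ?_⟩
  rw [show Λc = γ / b ^ 2 * a by rw [ha]; field_simp, mul_assoc, ha_mul]
  field_simp

lemma tendsto_exp_neg_mul_atTop_nhds_zero {A : ℝ} (hA : 0 < A) :
    Tendsto (fun t => exp (-A * t)) atTop (𝓝 0) :=
  tendsto_exp_atBot.comp (tendsto_id.const_mul_atTop_of_neg (neg_neg_iff_pos.2 hA))

lemma integral_exp_neg_mul_Ioi_zero {k : ℝ} (hk : 0 < k) :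
    ∫ v in Ioi (0 : ℝ), exp (-k * v) = 1 / k := by
  rw [integral_exp_mul_Ioi (neg_neg_iff_pos.2 hk), mul_zero, exp_zero]
  ring

lemma tendsto_setIntegral_exp_mul_of_tendsto {A C L : ℝ} (hA : 0 < A) {φ : ℝ → ℝ → ℝ}
    (hφ_meas : ∀ t, AEStronglyMeasurable (φ t) (volume.restrict (Ioi 0)))
    (hφ_bdd : ∀ t r, ‖φ t r‖ ≤ C)
    (hφ_lim : ∀ r, 0 < r → Tendsto (fun t => φ t r) atTop (𝓝 L)) :
    Tendsto (fun t => ∫ r in Ioi 0, exp (-A * r) * φ t r) atTop (𝓝 (L / A)) := by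
  have hL : L / A = ∫ r in Ioi 0, exp (-A * r) * L := by
    rw [integral_mul_const, integral_exp_neg_mul_Ioi_zero hA, one_div_mul_eq_div]
  rw [hL]
  refine tendsto_integral_filter_of_dominated_convergence (fun r => C * exp (-A * r))
    (Eventually.of_forall fun t => ?_) (Eventually.of_forall fun t => ?_)
    ((exp_neg_integrableOn_Ioi 0 hA).const_mul C) ?_
  · exact (continuous_exp.comp (continuous_const.mul continuous_id)).aestronglyMeasurable.mul
      (hφ_meas t)
  · refine ae_of_all _ fun r => ?_
    rw [norm_mul, norm_of_nonneg (exp_pos _).le, mul_comm]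
    exact mul_le_mul_of_nonneg_right (hφ_bdd t r) (exp_pos _).le
  · exact (ae_restrict_iff' measurableSet_Ioi).2 <| ae_of_all _ fun r hr =>
      (hφ_lim r hr).const_mul _

noncomputable def forwardDiscounted (k : ℝ) (p : ℝ → ℝ) (s : ℝ) : ℝ :=
  ∫ u in Ioi s, exp (-k * (u - s)) * p u

noncomputable def expConv (A : ℝ) (g : ℝ → ℝ) (t : ℝ) : ℝ :=
  ∫ s in Ioc 0 t, exp (-A * (t - s)) * g s

section forwardDiscounted

variable {k M : ℝ} {p : ℝ → ℝ}

lemma forwardDiscounted_eq_integral_comp_add (k : ℝ) (p : ℝ → ℝ) (s : ℝ) :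
    forwardDiscounted k p s = ∫ v in Ioi 0, exp (-k * v) * p (v + s) := by
  have := (measurePreserving_add_right volume s).setIntegral_preimage_emb
    (measurableEmbedding_addRight s) (fun u => exp (-k * (u - s)) * p u) (Ioi s)
  rw [preimage_add_const_Ioi, sub_self] at this
  simpa only [forwardDiscounted, add_sub_cancel_right] using this.symm

lemma abs_forwardDiscounted_le (hk : 0 < k) (hM : ∀ t, |p t| ≤ M) (s : ℝ) :
    |forwardDiscounted k p s| ≤ M / k := by
  rw [← norm_eq_abs, forwardDiscounted_eq_integral_comp_add]
  calc ‖∫ v in Ioi 0, exp (-k * v) * p (v + s)‖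
      ≤ ∫ v in Ioi 0, M * exp (-k * v) := by
        refine norm_integral_le_of_norm_le ((exp_neg_integrableOn_Ioi 0 hk).const_mul M)
          (ae_of_all _ fun v => ?_)
        rw [norm_mul, norm_of_nonneg (exp_pos _).le, mul_comm]
        exact mul_le_mul_of_nonneg_right (hM _) (exp_pos _).le
    _ = M / k := by rw [integral_const_mul, integral_exp_neg_mul_Ioi_zero hk, mul_one_div]

lemma tendsto_forwardDiscounted {P : ℝ} (hk : 0 < k) (hp : Measurable p)
    (hM : ∀ t, |p t| ≤ M) (hP : Tendsto p atTop (𝓝 P)) :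
    Tendsto (forwardDiscounted k p) atTop (𝓝 (P / k)) := by
  simp_rw [funext (forwardDiscounted_eq_integral_comp_add k p)]
  exact tendsto_setIntegral_exp_mul_of_tendsto hk
    (fun s => (hp.comp (measurable_add_const s)).aestronglyMeasurable)
    (fun s v => (norm_eq_abs _).trans_le (hM (v + s)))
    (fun v _ => hP.comp (tendsto_atTop_add_const_left atTop v tendsto_id))

lemma continuous_forwardDiscounted (hk : 0 < k) (hp : Measurable p) (hM : ∀ t, |p t| ≤ M) :
    Continuous (forwardDiscounted k p) := by
  have hint : ∀ c, IntegrableOn (fun u => exp (-k * u) * p u) (Ioi c) := fun c =>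
    (exp_neg_integrableOn_Ioi c hk).mul_bdd hp.aestronglyMeasurable
      (ae_of_all _ fun u => (norm_eq_abs (p u)).trans_le (hM u))
  have hsplit :
      forwardDiscounted k p = fun s => exp (k * s) * ∫ u in Ioi s, exp (-k * u) * p u := by
    ext s
    rw [forwardDiscounted, ← integral_const_mul]
    refine setIntegral_congr_fun measurableSet_Ioi fun u _ => ?_
    rw [← mul_assoc, ← exp_add]
    ring_nf
  rw [hsplit, continuous_iff_continuousAt]
  intro s
  refine (continuous_exp.comp (continuous_const.mul continuous_id)).continuousAt.mul ?_
  exact ((hint (s - 1)).continuousOn_Ici_primitive_Ioi).continuousAt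
    (Ici_mem_nhds (by linarith))

end forwardDiscounted

section expConv

variable {A : ℝ} {g : ℝ → ℝ}

lemma expConv_eq_setIntegral_indicator (A : ℝ) (g : ℝ → ℝ) {t : ℝ} (ht : 0 ≤ t) :
    expConv A g t = ∫ r in Ioi 0, exp (-A * r) * (Iic t).indicator (fun r => g (t - r)) r := by
  rw [show (fun r => exp (-A * r) * (Iic t).indicator (fun r => g (t - r)) r) =
      (Iic t).indicator (fun r => exp (-A * r) * g (t - r)) from
    funext fun r => (indicator_mul_right (Iic t) (fun r => exp (-A * r)) _).symm,
    setIntegral_indicator measurableSet_Iic, Ioi_inter_Iic, expConv,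
    ← intervalIntegral.integral_of_le ht, ← intervalIntegral.integral_of_le ht]
  simpa only [sub_sub_cancel, sub_self, sub_zero] using
    intervalIntegral.integral_comp_sub_left (a := 0) (b := t) (fun r => exp (-A * r) * g (t - r)) t

lemma tendsto_expConv {C L : ℝ} (hA : 0 < A) (hg : Measurable g) (hC : ∀ s, |g s| ≤ C)
    (hL : Tendsto g atTop (𝓝 L)) : Tendsto (expConv A g) atTop (𝓝 (L / A)) := by
  refine (tendsto_setIntegral_exp_mul_of_tendsto
    (φ := fun t => (Iic t).indicator fun r => g (t - r)) hA
    (fun t => ((hg.comp (measurable_const_sub t)).indicator measurableSet_Iic).aestronglyMeasurable)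
    (fun t r => (norm_indicator_le_norm_self _ _).trans ((norm_eq_abs _).trans_le (hC _)))
    (fun r _ => ?_)).congr' ?_
  · refine (hL.comp (tendsto_atTop_add_const_right atTop (-r) tendsto_id)).congr' ?_
    filter_upwards [Ici_mem_atTop r] with t ht
    simp [indicator_of_mem (show r ∈ Iic t from ht), sub_eq_add_neg]
  · filter_upwards [Ici_mem_atTop 0] with t ht
    exact (expConv_eq_setIntegral_indicator A g ht).symm

lemma expConv_eq_exp_mul_integral (A : ℝ) (g : ℝ → ℝ) {t : ℝ} (ht : 0 ≤ t) :
    expConv A g t = exp (-A * t) * ∫ s in 0..t, exp (A * s) * g s := by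
  rw [expConv, intervalIntegral.integral_of_le ht, ← integral_const_mul]
  refine setIntegral_congr_fun measurableSet_Ioc fun s _ => ?_
  rw [← mul_assoc, ← exp_add]
  ring_nf

lemma hasDerivAt_expConv (hg : Continuous g) {t : ℝ} (ht : 0 < t) :
    HasDerivAt (expConv A g) (g t - A * expConv A g t) t := by
  have hcont : Continuous fun s => exp (A * s) * g s := by fun_prop
  have hprim : HasDerivAt (fun u => ∫ s in 0..u, exp (A * s) * g s) (exp (A * t) * g t) t :=
    intervalIntegral.integral_hasDerivAt_right (hcont.intervalIntegrable _ _)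
      (hcont.stronglyMeasurableAtFilter _ _) hcont.continuousAt
  have hexp : HasDerivAt (fun u => exp (-A * u)) (exp (-A * t) * -A) t := by
    simpa using ((hasDerivAt_id t).const_mul (-A)).exp
  refine ((hexp.mul hprim).congr_of_eventuallyEq ?_).congr_deriv ?_
  · filter_upwards [Ioi_mem_nhds ht] with u hu
    exact expConv_eq_exp_mul_integral A g (le_of_lt hu)
  · rw [expConv_eq_exp_mul_integral A g ht.le, ← mul_assoc, ← exp_add, neg_mul,
      neg_add_cancel, exp_zero]
    ring

lemma tendsto_deriv_exp_add_expConv (hA : 0 < A) (hg : Continuous g) {L : ℝ} (x₀ B C : ℝ)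
    (hgL : Tendsto g atTop (𝓝 L)) (hF : Tendsto (expConv A g) atTop (𝓝 (L / A))) :
    Tendsto (deriv fun t => x₀ * exp (-A * t) + B * expConv A g t + C * (1 - exp (-A * t)))
      atTop (𝓝 0) := by
  have hexp := tendsto_exp_neg_mul_atTop_nhds_zero hA
  have hexp' : ∀ t, HasDerivAt (fun t => exp (-A * t)) (exp (-A * t) * -A) t := fun t => by
    simpa using ((hasDerivAt_id t).const_mul (-A)).exp
  have hlim := (((hexp.mul_const (-A)).const_mul x₀).add
    ((hgL.sub (hF.const_mul A)).const_mul B)).add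
    (((tendsto_const_nhds (x := 0)).sub (hexp.mul_const (-A))).const_mul C)
  rw [mul_div_cancel₀ _ hA.ne', sub_self] at hlim
  simp only [zero_mul, mul_zero, sub_zero, add_zero] at hlim
  refine hlim.congr' ?_
  filter_upwards [Ioi_mem_atTop 0] with t ht
  exact ((((hexp' t).const_mul x₀).add ((hasDerivAt_expConv hg ht).const_mul B)).add
    (((hasDerivAt_const t 1).sub (hexp' t)).const_mul C)).deriv.symm

end expConv

theorem stmt_6_general (ρ σ b γ η : ℝ) (hσ : 0 < σ) (hb : 0 < b)
    (hγ : 0 < γ) (hη : 0 < η)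
    (θ c x₀ : ℝ)
    (Kc Λc a : ℝ)
    (hKc : Kc = (γ / (2 * b ^ 2)) *
      (-(ρ - σ ^ 2) + Real.sqrt ((ρ - σ ^ 2) ^ 2 + 4 * b ^ 2 * η / γ)))
    (hΛc : Λc = (γ / (2 * b ^ 2)) *
      (-ρ + Real.sqrt (ρ ^ 2 + 4 * b ^ 2 * σ ^ 2 * Kc / γ)))
    (ha : a = b ^ 2 * Λc / γ)
    (p : ℝ → ℝ) (hp_meas : Measurable p) (hp_bdd : ∃ M : ℝ, ∀ t, |p t| ≤ M)
    (Pbar : ℝ) (hp_lim : Tendsto p atTop (nhds Pbar))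
    (m : ℝ → ℝ)
    (hm : ∀ t : ℝ, m t =
      x₀ * Real.exp (-a * t) +
      (b ^ 2 / (2 * γ)) *
        (∫ s in Set.Ioc (0 : ℝ) t, Real.exp (-a * (t - s)) *
          ∫ u in Set.Ioi s, Real.exp (-(ρ + a) * (u - s)) * p u) +
      ((θ - ρ * c / b) / (2 * Λc * (ρ + a))) * (1 - Real.exp (-a * t))) :
    Tendsto m atTop (nhds ((Pbar + θ - ρ * c / b) / (2 * σ ^ 2 * Kc))) ∧
      Tendsto (fun t : ℝ => (1 / b) * deriv m t) atTop (nhds 0) := by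
  obtain ⟨M, hM⟩ := hp_bdd
  obtain ⟨hKc_pos, ha_pos, hρa, ha_mul, hΛc_mul⟩ :=
    riccati_roots_spec hσ.ne' hb.ne' hγ hη hKc hΛc ha
  set g := forwardDiscounted (ρ + a) p
  set B := b ^ 2 / (2 * γ)
  set C := (θ - ρ * c / b) / (2 * Λc * (ρ + a))
  have hm' : m = fun t => x₀ * exp (-a * t) + B * expConv a g t + C * (1 - exp (-a * t)) :=
    funext hm
  have hg_lim : Tendsto g atTop (𝓝 (Pbar / (ρ + a))) :=
    tendsto_forwardDiscounted hρa hp_meas hM hp_lim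
  have hg_cont : Continuous g := continuous_forwardDiscounted hρa hp_meas hM
  have hF_lim :=
    tendsto_expConv ha_pos hg_cont.measurable (abs_forwardDiscounted_le hρa hM) hg_lim
  have hexp := tendsto_exp_neg_mul_atTop_nhds_zero ha_pos
  rw [hm']
  constructor
  · convert ((hexp.const_mul x₀).add (hF_lim.const_mul B)).add
      ((tendsto_const_nhds.sub hexp).const_mul C) using 2
    simp only [B, C, mul_zero, sub_zero, zero_add, mul_one]
    rw [mul_assoc 2 Λc, hΛc_mul]
    field_simp
    linear_combination (Pbar * b) * ha_mul
  · simpa using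
      (tendsto_deriv_exp_add_expConv ha_pos hg_cont x₀ B C hg_lim hF_lim).const_mul (1 / b)

/-- deterministic content of Proposition 3.1: if the mean price
`p(t)` is bounded, measurable, and converges to `P̄`, then the mean optimal
distributed generation `m(t)` converges to the stationary level
`X̂_∞(P̄) = (P̄ + θ − ρc/b)/(2σ²K_c)`, and the mean installation rate
`(1/b)·m'(t)` tends to zero. -/
theorem stmt_6 (ρ σ b γ η : ℝ) (hρ : 0 < ρ) (hσ : 0 < σ) (hb : 0 < b)
    (hγ : 0 < γ) (hη : 0 < η) (hρσ : σ ^ 2 < ρ)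
    (θ c x₀ : ℝ)
    (Kc Λc a : ℝ)
    (hKc : Kc = (γ / (2 * b ^ 2)) *
      (-(ρ - σ ^ 2) + Real.sqrt ((ρ - σ ^ 2) ^ 2 + 4 * b ^ 2 * η / γ)))
    (hΛc : Λc = (γ / (2 * b ^ 2)) *
      (-ρ + Real.sqrt (ρ ^ 2 + 4 * b ^ 2 * σ ^ 2 * Kc / γ)))
    (ha : a = b ^ 2 * Λc / γ)
    (p : ℝ → ℝ) (hp_meas : Measurable p) (hp_bdd : ∃ M : ℝ, ∀ t, |p t| ≤ M)
    (Pbar : ℝ) (hp_lim : Tendsto p atTop (nhds Pbar))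
    (m : ℝ → ℝ)
    (hm : ∀ t : ℝ, m t =
      x₀ * Real.exp (-a * t) +
      (b ^ 2 / (2 * γ)) *
        (∫ s in Set.Ioc (0 : ℝ) t, Real.exp (-a * (t - s)) *
          ∫ u in Set.Ioi s, Real.exp (-(ρ + a) * (u - s)) * p u) +
      ((θ - ρ * c / b) / (2 * Λc * (ρ + a))) * (1 - Real.exp (-a * t))) :
    Tendsto m atTop (nhds ((Pbar + θ - ρ * c / b) / (2 * σ ^ 2 * Kc))) ∧
      Tendsto (fun t : ℝ => (1 / b) * deriv m t) atTop (nhds 0) :=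
  stmt_6_general ρ σ b γ η hσ hb hγ hη θ c x₀ Kc Λc a hKc hΛc ha p hp_meas hp_bdd Pbar hp_lim m hm
end

section
/- Suppose (K11, K12, K22) solves the social planner's Riccati system and the matrix [[K11, K12],[K12, K22]] is symmetric positive-definite (i.e. K11 > 0, K22 > 0 and K12² < K11·K22). Then 0 < K12 < K22 and K12² < λδ, i.e. λ − (1/δ)·K12² > 0. -/
/-- Lemma A.3, first part: if `(K11, K12, K22)` solves the
social planner's Riccati system and the matrix `[[K11,K12],[K12,K22]]` is
symmetric positive-definite, then `0 < K12 < K22` and `K12² < λδ`,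
i.e. `λ − (1/δ)·K12² > 0`. -/
theorem stmt_11 (ρ σ b γ δ lam η : ℝ) (hρ : 0 < ρ) (hσ : 0 < σ) (hb : 0 < b)
    (hγ : 0 < γ) (hδ : 0 < δ) (hlam : 0 < lam) (hη : 0 < η) (hρσ : σ ^ 2 < ρ)
    (K11 K12 K22 : ℝ)
    (heq1 : (b ^ 2 / γ) * K11 ^ 2 + (1 / δ) * K12 ^ 2 + (ρ - σ ^ 2) * K11 - lam - η = 0)
    (heq2 : (b ^ 2 / γ) * K11 * K12 + (1 / δ) * K12 * K22 + ρ * K12 - lam = 0)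
    (heq3 : (b ^ 2 / γ) * K12 ^ 2 + (1 / δ) * K22 ^ 2 + ρ * K22 - lam = 0)
    (hK11 : 0 < K11) (hK22 : 0 < K22) (hpd : K12 ^ 2 < K11 * K22) :
    0 < K12 ∧ K12 < K22 ∧ K12 ^ 2 < lam * δ ∧ 0 < lam - (1 / δ) * K12 ^ 2 := by
  have hbγ : 0 < b ^ 2 / γ := by positivity
  have hδ' : 0 < 1 / δ := by positivity
  -- K12 > 0
  have hfac : K12 * ((b ^ 2 / γ) * K11 + (1 / δ) * K22 + ρ) = lam := by linarith [heq2]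
  have hC : 0 < (b ^ 2 / γ) * K11 + (1 / δ) * K22 + ρ := by positivity
  have hK12 : 0 < K12 := by
    by_contra h
    push_neg at h
    nlinarith [mul_nonpos_of_nonpos_of_nonneg h hC.le]
  -- K12 < K22
  have hlt : K12 < K22 := by
    by_contra h
    push_neg at h
    -- eq2 - eq3 : (b²/γ)K12(K11-K12) = (K22-K12)((1/δ)K22 + ρ) ≤ 0
    nlinarith [mul_nonneg (sub_nonneg.mpr h) hK12.le,
      mul_pos hδ' hK22, mul_pos hbγ hK12, hpd,
      mul_nonpos_of_nonpos_of_nonneg (sub_nonpos.mpr h) (by positivity : (0:ℝ) ≤ (1/δ)*K22 + ρ)]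
  -- K12² < lam * δ
  have hsq : K12 ^ 2 < K22 ^ 2 := by nlinarith
  have hlam2 : (1 / δ) * K12 ^ 2 < lam := by nlinarith [mul_pos hρ hK22, mul_lt_mul_of_pos_left hsq hδ', mul_pos hbγ (pow_pos hK12 2)]
  have hlδ : K12 ^ 2 < lam * δ := by
    have h := mul_lt_mul_of_pos_right hlam2 hδ
    have h2 : (1 / δ * K12 ^ 2) * δ = K12 ^ 2 := by field_simp
    linarith
  exact ⟨hK12, hlt, hlδ, by linarith⟩
end

section
/- Suppose (K11, K12, K22) solves the social planner's Riccati system and the matrix [[K11, K12],[K12, K22]] is symmetric positive-definite (i.e. K11 > 0, K22 > 0 and K12² < K11·K22). Then K11 > K_c. -/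
set_option maxHeartbeats 1000000


/-- Lemma A.3: if `(K11, K12, K22)` solves the social planner's
Riccati system and the matrix `[[K11,K12],[K12,K22]]` is symmetric
positive-definite, then `K11 > K_c`. -/
theorem stmt_12 (ρ σ b γ δ lam η : ℝ) (hρ : 0 < ρ) (hσ : 0 < σ) (hb : 0 < b)
    (hγ : 0 < γ) (hδ : 0 < δ) (hlam : 0 < lam) (hη : 0 < η) (hρσ : σ ^ 2 < ρ)
    (K11 K12 K22 : ℝ)
    (heq1 : (b ^ 2 / γ) * K11 ^ 2 + (1 / δ) * K12 ^ 2 + (ρ - σ ^ 2) * K11 - lam - η = 0)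
    (heq2 : (b ^ 2 / γ) * K11 * K12 + (1 / δ) * K12 * K22 + ρ * K12 - lam = 0)
    (heq3 : (b ^ 2 / γ) * K12 ^ 2 + (1 / δ) * K22 ^ 2 + ρ * K22 - lam = 0)
    (hK11 : 0 < K11) (hK22 : 0 < K22) (hpd : K12 ^ 2 < K11 * K22)
    (Kc : ℝ)
    (hKc : Kc = (γ / (2 * b ^ 2)) *
      (-(ρ - σ ^ 2) + Real.sqrt ((ρ - σ ^ 2) ^ 2 + 4 * b ^ 2 * η / γ))) :
    Kc < K11 := by
  have hA : 0 < b ^ 2 / γ := by positivity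
  have hB : 0 < 1 / δ := by positivity
  have hm : 0 < ρ - σ ^ 2 := by linarith
  -- K12 > 0
  have hK12 : 0 < K12 := by
    by_contra h
    push_neg at h
    nlinarith [mul_nonpos_of_nonneg_of_nonpos hA.le h,
      mul_nonpos_of_nonneg_of_nonpos hB.le h, mul_pos hA hK11, mul_pos hB hK22]
  -- K12 ≤ K22
  have h1222 : K12 ≤ K22 := by
    by_contra h
    push_neg at h
    -- from heq3 - heq2 : (K22 - K12)(B K22 + ρ) = A K12 (K11 - K12)
    have key : (K22 - K12) * ((1 / δ) * K22 + ρ) = (b ^ 2 / γ) * K12 * (K11 - K12) := by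
      linear_combination heq3 - heq2
    have hK1211 : K12 < K11 := by
      nlinarith [mul_pos hK12 (sub_pos.mpr h)]
    have hL : (K22 - K12) * ((1 / δ) * K22 + ρ) < 0 :=
      mul_neg_of_neg_of_pos (by linarith) (by positivity)
    have hR : 0 < (b ^ 2 / γ) * K12 * (K11 - K12) :=
      mul_pos (mul_pos hA hK12) (by linarith)
    linarith
  -- key quadratic inequality
  have hquad : (b ^ 2 / γ) * K11 ^ 2 + (ρ - σ ^ 2) * K11 - η > 0 := by
    have h1 : (0:ℝ) ≤ K22 ^ 2 - K12 ^ 2 := by nlinarith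
    have h2 : lam - (1 / δ) * K12 ^ 2
        = (b ^ 2 / γ) * K12 ^ 2 + (1 / δ) * (K22 ^ 2 - K12 ^ 2) + ρ * K22 := by
      linear_combination -heq3
    have h3 : lam - (1 / δ) * K12 ^ 2 > 0 := by
      rw [h2]
      have := mul_pos hρ hK22
      have := mul_nonneg hB.le h1
      positivity
    linarith [heq1, h3]
  -- sqrt facts
  set s := Real.sqrt ((ρ - σ ^ 2) ^ 2 + 4 * b ^ 2 * η / γ) with hs
  have hsnn : 0 ≤ s := Real.sqrt_nonneg _
  have hs2 : s ^ 2 = (ρ - σ ^ 2) ^ 2 + 4 * b ^ 2 * η / γ := by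
    rw [hs, sq, Real.mul_self_sqrt (by positivity)]
  -- show s < 2 * (b^2/γ) * K11 + (ρ - σ^2)
  have hlt : s < 2 * (b ^ 2 / γ) * K11 + (ρ - σ ^ 2) := by
    have ht : 0 < 2 * (b ^ 2 / γ) * K11 + (ρ - σ ^ 2) := by
      have := mul_pos hA hK11; linarith
    by_contra h
    push_neg at h
    have hsq : (2 * (b ^ 2 / γ) * K11 + (ρ - σ ^ 2)) ^ 2 ≤ s ^ 2 :=
      pow_le_pow_left₀ ht.le h 2
    rw [hs2] at hsq
    have hexp : (2 * (b ^ 2 / γ) * K11 + (ρ - σ ^ 2)) ^ 2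
        = 4 * ((b ^ 2 / γ) * ((b ^ 2 / γ) * K11 ^ 2 + (ρ - σ ^ 2) * K11 - η))
          + (ρ - σ ^ 2) ^ 2 + 4 * b ^ 2 * η / γ := by
      field_simp
      ring
    rw [hexp] at hsq
    nlinarith [mul_pos hA hquad]
  rw [hKc]
  have h2b : 0 < γ / (2 * b ^ 2) := by positivity
  have : γ / (2 * b ^ 2) * (b ^ 2 / γ) = 1 / 2 := by field_simp
  calc γ / (2 * b ^ 2) * (-(ρ - σ ^ 2) + s)
      < γ / (2 * b ^ 2) * (-(ρ - σ ^ 2) + (2 * (b ^ 2 / γ) * K11 + (ρ - σ ^ 2))) := by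
        apply mul_lt_mul_of_pos_left _ h2b
        linarith
    _ = K11 := by field_simp; ring
end

section
/- Let 0 < γ₁ ≤ γ₂ and 0 < δ₁ ≤ δ₂, and for i = 1, 2 let K⁽ⁱ⁾ = [[K11⁽ⁱ⁾, K12⁽ⁱ⁾],[K12⁽ⁱ⁾, K22⁽ⁱ⁾]] be the unique symmetric positive-definite matrix whose entries solve the social planner's Riccati system with parameters (γᵢ, δᵢ) (the other parameters ρ, σ, b, λ, η being fixed). Then K11⁽¹⁾ ≤ K11⁽²⁾; consequently, if ρh + π + θ − ρc/b ≥ 0 for real constants h, π, θ, c, the stationary distributed generation X*_∞ := (ρh + π + θ − ρc/b)/(2σ²K11) is nonincreasing with respect to γ and δ. -/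
set_option maxHeartbeats 2000000

theorem aux_nonneg_of_mul {c b : ℝ} (h : 0 ≤ c * b) (hc : 0 < c) : 0 ≤ b := by
  by_contra hb
  push_neg at hb
  nlinarith

theorem riccati_mono (a₁ a₂ d₁ d₂ r s lam : ℝ) (x₁ y₁ z₁ x₂ y₂ z₂ : ℝ) (eta : ℝ)
    (ha₂ : 0 < a₂) (ha : a₂ ≤ a₁) (hd₂ : 0 < d₂) (hd : d₂ ≤ d₁)
    (hr : 0 < r) (hrs : s < r) (hlam : 0 < lam)
    (e11 : a₁ * x₁ ^ 2 + d₁ * y₁ ^ 2 + (r - s) * x₁ - lam - eta = 0)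
    (e21 : a₁ * x₁ * y₁ + d₁ * y₁ * z₁ + r * y₁ - lam = 0)
    (e31 : a₁ * y₁ ^ 2 + d₁ * z₁ ^ 2 + r * z₁ - lam = 0)
    (hx₁ : 0 < x₁) (hdet₁ : 0 < x₁ * z₁ - y₁ ^ 2)
    (e12 : a₂ * x₂ ^ 2 + d₂ * y₂ ^ 2 + (r - s) * x₂ - lam - eta = 0)
    (e22 : a₂ * x₂ * y₂ + d₂ * y₂ * z₂ + r * y₂ - lam = 0)
    (e32 : a₂ * y₂ ^ 2 + d₂ * z₂ ^ 2 + r * z₂ - lam = 0)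
    (hx₂ : 0 < x₂) (hdet₂ : 0 < x₂ * z₂ - y₂ ^ 2) :
    x₁ ≤ x₂ := by
  have ha₁ : 0 < a₁ := lt_of_lt_of_le ha₂ ha
  have hd₁ : 0 < d₂ := hd₂
  have hd₁' : 0 < d₁ := lt_of_lt_of_le hd₂ hd
  have hz₁ : 0 < z₁ := by nlinarith [sq_nonneg y₁, mul_pos hx₁ hx₁]
  have hz₂ : 0 < z₂ := by nlinarith [sq_nonneg y₂, mul_pos hx₂ hx₂]
  have hy₁ : 0 < y₁ := by nlinarith [mul_pos (mul_pos ha₁ hx₁) hz₁, mul_pos ha₁ hx₁, mul_pos hd₁' hz₁]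
  have hy₂ : 0 < y₂ := by nlinarith [mul_pos (mul_pos ha₂ hx₂) hz₂, mul_pos ha₂ hx₂, mul_pos hd₂ hz₂]
  have hM11 : 0 < x₁ + x₂ := by linarith
  have hM12 : 0 < y₁ + y₂ := by linarith
  have hM22 : 0 < z₁ + z₂ := by linarith
  have h1 : 0 < x₁ * z₂ + x₂ * z₁ - 2 * y₁ * y₂ := by
    nlinarith [sq_nonneg (x₂ * y₁ - x₁ * y₂), mul_pos (mul_pos hx₂ hx₂) hdet₁,
      mul_pos (mul_pos hx₁ hx₁) hdet₂, mul_pos hx₁ hx₂]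
  have hdetM : 0 < (x₁ + x₂) * (z₁ + z₂) - (y₁ + y₂) ^ 2 := by nlinarith [hdet₁, hdet₂, h1]
  have hQ2 : 0 < (2 * a₂ * d₂ * ((x₁ + x₂) * (z₁ + z₂) - (y₁ + y₂) ^ 2) + 2 * a₂ * r * (x₁ + x₂) + 2 * d₂ ^ 2 * (z₁ + z₂) ^ 2 + 6 * d₂ * r * (z₁ + z₂) + 4 * r ^ 2) := by
    nlinarith [mul_pos (mul_pos ha₂ hd₂) hdetM, mul_pos (mul_pos ha₂ hr) hM11,
      mul_pos (mul_pos hd₂ hr) hM22, sq_nonneg (d₂ * (z₁ + z₂)), mul_pos hr hr]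
  have hgap : 0 < (2 * a₂ * d₂ * ((x₁ + x₂) * (z₁ + z₂) - (y₁ + y₂) ^ 2) + 2 * a₂ * r * (x₁ + x₂) + 2 * d₂ ^ 2 * (z₁ + z₂) ^ 2 + 6 * d₂ * r * (z₁ + z₂) + 4 * r ^ 2) - 2 * (d₂ * (z₁ + z₂) + r) ^ 2 := by
    nlinarith [mul_pos (mul_pos ha₂ hd₂) hdetM, mul_pos (mul_pos ha₂ hr) hM11,
      mul_pos (mul_pos hd₂ hr) hM22, mul_pos hr hr]
  have hdetT : 0 < ((2 * a₂ * (x₁ + x₂) + 2 * (r - s)) * (2 * a₂ * d₂ * ((x₁ + x₂) * (z₁ + z₂) - (y₁ + y₂) ^ 2) + 2 * a₂ * r * (x₁ + x₂) + 2 * d₂ ^ 2 * (z₁ + z₂) ^ 2 + 6 * d₂ * r * (z₁ + z₂) + 4 * r ^ 2) - 4 * a₂ * d₂ * (y₁ + y₂) ^ 2 * (d₂ * (z₁ + z₂) + r)) := by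
    linarith [mul_pos (sub_pos.mpr hrs) hQ2,
      mul_nonneg (mul_nonneg (mul_nonneg (mul_nonneg ha₂.le ha₂.le) hd₂.le) hM11.le) hdetM.le,
      mul_nonneg (mul_nonneg (mul_nonneg ha₂.le ha₂.le) hr.le) (mul_nonneg hM11.le hM11.le),
      mul_nonneg (mul_nonneg ha₂.le (mul_pos hr hr).le) hM11.le,
      mul_nonneg (mul_nonneg (mul_nonneg (mul_nonneg ha₂.le hd₂.le) hd₂.le) hM22.le) hdetM.le,
      mul_nonneg (mul_nonneg (mul_nonneg ha₂.le hd₂.le) hr.le) hdetM.le,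
      mul_nonneg (mul_nonneg (mul_nonneg (mul_nonneg ha₂.le hd₂.le) hr.le) hM11.le) hM22.le]
  have hkey : ((2 * a₂ * (x₁ + x₂) + 2 * (r - s)) * (2 * a₂ * d₂ * ((x₁ + x₂) * (z₁ + z₂) - (y₁ + y₂) ^ 2) + 2 * a₂ * r * (x₁ + x₂) + 2 * d₂ ^ 2 * (z₁ + z₂) ^ 2 + 6 * d₂ * r * (z₁ + z₂) + 4 * r ^ 2) - 4 * a₂ * d₂ * (y₁ + y₂) ^ 2 * (d₂ * (z₁ + z₂) + r)) * (x₂ - x₁) = (2 * ((a₁ - a₂) * x₁ ^ 2 + (d₁ - d₂) * y₁ ^ 2) * (2 * a₂ * d₂ * ((x₁ + x₂) * (z₁ + z₂) - (y₁ + y₂) ^ 2) + 2 * a₂ * r * (x₁ + x₂) + 2 * d₂ ^ 2 * (z₁ + z₂) ^ 2 + 6 * d₂ * r * (z₁ + z₂) + 4 * r ^ 2) - 8 * d₂ * (y₁ + y₂) * (d₂ * (z₁ + z₂) + r) * ((a₁ - a₂) * x₁ * y₁ + (d₁ - d₂) * y₁ * z₁) + 4 * d₂ ^ 2 * (y₁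 + y₂) ^ 2 * ((a₁ - a₂) * y₁ ^ 2 + (d₁ - d₂) * z₁ ^ 2)) := by
    linear_combination (2 * (2 * a₂ * d₂ * ((x₁ + x₂) * (z₁ + z₂) - (y₁ + y₂) ^ 2) + 2 * a₂ * r * (x₁ + x₂) + 2 * d₂ ^ 2 * (z₁ + z₂) ^ 2 + 6 * d₂ * r * (z₁ + z₂) + 4 * r ^ 2)) * e12 - (2 * (2 * a₂ * d₂ * ((x₁ + x₂) * (z₁ + z₂) - (y₁ + y₂) ^ 2) + 2 * a₂ * r * (x₁ + x₂) + 2 * d₂ ^ 2 * (z₁ + z₂) ^ 2 + 6 * d₂ * r * (z₁ + z₂) + 4 * r ^ 2)) * e11 - (2 * (2 * d₂ * (y₁ + y₂)) * (2 * d₂ * (z₁ + z₂) + 2 * r)) * e22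
      + (2 * (2 * d₂ * (y₁ + y₂)) * (2 * d₂ * (z₁ + z₂) + 2 * r)) * e21 + (2 * (2 * d₂ * (y₁ + y₂)) * (d₂ * (y₁ + y₂))) * e32 - (2 * (2 * d₂ * (y₁ + y₂)) * (d₂ * (y₁ + y₂))) * e31
  have hNa' : 0 ≤ (2 * a₂ * d₂ * ((x₁ + x₂) * (z₁ + z₂) - (y₁ + y₂) ^ 2) + 2 * a₂ * r * (x₁ + x₂) + 2 * d₂ ^ 2 * (z₁ + z₂) ^ 2 + 6 * d₂ * r * (z₁ + z₂) + 4 * r ^ 2) * (2 * x₁ ^ 2 * (2 * a₂ * d₂ * ((x₁ + x₂) * (z₁ + z₂) - (y₁ + y₂) ^ 2) + 2 * a₂ * r * (x₁ + x₂) + 2 * d₂ ^ 2 * (z₁ + z₂) ^ 2 + 6 * d₂ * r * (z₁ + z₂) + 4 * r ^ 2) - 8 * d₂ * (y₁ + y₂) * (d₂ * (z₁ + z₂) + r) * (x₁ * y₁) + 4 * d₂ ^ 2 * (y₁ + y₂) ^ 2 * y₁ ^ 2) := by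
    linarith [sq_nonneg ((2 * a₂ * d₂ * ((x₁ + x₂) * (z₁ + z₂) - (y₁ + y₂) ^ 2) + 2 * a₂ * r * (x₁ + x₂) + 2 * d₂ ^ 2 * (z₁ + z₂) ^ 2 + 6 * d₂ * r * (z₁ + z₂) + 4 * r ^ 2) * x₁ - 2 * d₂ * (y₁ + y₂) * (d₂ * (z₁ + z₂) + r) * y₁),
      mul_nonneg hgap.le (sq_nonneg (d₂ * (y₁ + y₂) * y₁))]
  have hNb' : 0 ≤ (2 * a₂ * d₂ * ((x₁ + x₂) * (z₁ + z₂) - (y₁ + y₂) ^ 2) + 2 * a₂ * r * (x₁ + x₂) + 2 * d₂ ^ 2 * (z₁ + z₂) ^ 2 + 6 * d₂ * r * (z₁ + z₂) + 4 * r ^ 2) * (2 * y₁ ^ 2 * (2 * a₂ * d₂ * ((x₁ + x₂) * (z₁ + z₂) - (y₁ + y₂) ^ 2) + 2 * a₂ * r * (x₁ + x₂) + 2 * d₂ ^ 2 * (z₁ + z₂) ^ 2 + 6 * d₂ * r * (z₁ + z₂) + 4 * r ^ 2) - 8 * d₂ * (y₁ + y₂) * (d₂ * (z₁ + z₂) +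 r) * (y₁ * z₁) + 4 * d₂ ^ 2 * (y₁ + y₂) ^ 2 * z₁ ^ 2) := by
    linarith [sq_nonneg ((2 * a₂ * d₂ * ((x₁ + x₂) * (z₁ + z₂) - (y₁ + y₂) ^ 2) + 2 * a₂ * r * (x₁ + x₂) + 2 * d₂ ^ 2 * (z₁ + z₂) ^ 2 + 6 * d₂ * r * (z₁ + z₂) + 4 * r ^ 2) * y₁ - 2 * d₂ * (y₁ + y₂) * (d₂ * (z₁ + z₂) + r) * z₁),
      mul_nonneg hgap.le (sq_nonneg (d₂ * (y₁ + y₂) * z₁))]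
  have hNa : 0 ≤ (2 * x₁ ^ 2 * (2 * a₂ * d₂ * ((x₁ + x₂) * (z₁ + z₂) - (y₁ + y₂) ^ 2) + 2 * a₂ * r * (x₁ + x₂) + 2 * d₂ ^ 2 * (z₁ + z₂) ^ 2 + 6 * d₂ * r * (z₁ + z₂) + 4 * r ^ 2) - 8 * d₂ * (y₁ + y₂) * (d₂ * (z₁ + z₂) + r) * (x₁ * y₁) + 4 * d₂ ^ 2 * (y₁ + y₂) ^ 2 * y₁ ^ 2) := aux_nonneg_of_mul hNa' hQ2
  have hNb : 0 ≤ (2 * y₁ ^ 2 * (2 * a₂ * d₂ * ((x₁ + x₂) * (z₁ + z₂) - (y₁ + y₂) ^ 2) + 2 * a₂ * r * (x₁ + x₂) + 2 * d₂ ^ 2 * (z₁ + z₂) ^ 2 + 6 * d₂ * r * (z₁ + z₂) + 4 * r ^ 2) - 8 * d₂ * (y₁ + y₂) * (d₂ * (z₁ + z₂) + r) * (y₁ * z₁) + 4 * d₂ ^ 2 * (y₁ + y₂) ^ 2 * z₁ ^ 2) := aux_nonneg_of_mul hNb' hQ2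
  have hN : 0 ≤ (2 * ((a₁ - a₂) * x₁ ^ 2 + (d₁ - d₂) * y₁ ^ 2) * (2 * a₂ * d₂ * ((x₁ + x₂) * (z₁ + z₂) - (y₁ + y₂) ^ 2) + 2 * a₂ * r * (x₁ + x₂) + 2 * d₂ ^ 2 * (z₁ + z₂) ^ 2 + 6 * d₂ * r * (z₁ + z₂) + 4 * r ^ 2) - 8 * d₂ * (y₁ + y₂) * (d₂ * (z₁ + z₂) + r) * ((a₁ - a₂) * x₁ * y₁ + (d₁ - d₂) * y₁ * z₁) + 4 * d₂ ^ 2 * (y₁ + y₂) ^ 2 * ((a₁ - a₂) * y₁ ^ 2 + (d₁ - d₂) * z₁ ^ 2)) := by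
    linarith [mul_nonneg (sub_nonneg.mpr ha) hNa, mul_nonneg (sub_nonneg.mpr hd) hNb]
  have hfin : 0 ≤ ((2 * a₂ * (x₁ + x₂) + 2 * (r - s)) * (2 * a₂ * d₂ * ((x₁ + x₂) * (z₁ + z₂) - (y₁ + y₂) ^ 2) + 2 * a₂ * r * (x₁ + x₂) + 2 * d₂ ^ 2 * (z₁ + z₂) ^ 2 + 6 * d₂ * r * (z₁ + z₂) + 4 * r ^ 2) - 4 * a₂ * d₂ * (y₁ + y₂) ^ 2 * (d₂ * (z₁ + z₂) + r)) * (x₂ - x₁) := hkey ▸ hN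
  have := aux_nonneg_of_mul hfin hdetT
  linarith


/-- monotonicity in the adjustment costs: if `0 < γ₁ ≤ γ₂` and
`0 < δ₁ ≤ δ₂`, and `(K11ᵢ, K12ᵢ, K22ᵢ)` are the entries of the (unique)
symmetric positive-definite solutions of the social planner's Riccati system
with parameters `(γᵢ, δᵢ)`, then `K11₁ ≤ K11₂`; consequently, provided
`ρh + π + θ − ρc/b ≥ 0`, the stationary distributed generation
`X*_∞ = (ρh + π + θ − ρc/b)/(2σ²K11)` is nonincreasing in `γ` and `δ`. -/
theorem stmt_13 (ρ σ b lam η : ℝ) (hρ : 0 < ρ) (hσ : 0 < σ) (hb : 0 < b)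
    (hlam : 0 < lam) (hη : 0 < η) (hρσ : σ ^ 2 < ρ)
    (γ₁ γ₂ δ₁ δ₂ : ℝ) (hγ₁ : 0 < γ₁) (hγ : γ₁ ≤ γ₂) (hδ₁ : 0 < δ₁) (hδ : δ₁ ≤ δ₂)
    (K11₁ K12₁ K22₁ K11₂ K12₂ K22₂ : ℝ)
    -- (K11₁, K12₁, K22₁) solves the system with parameters (γ₁, δ₁) and is SPD
    (heq1₁ : (b ^ 2 / γ₁) * K11₁ ^ 2 + (1 / δ₁) * K12₁ ^ 2
      + (ρ - σ ^ 2) * K11₁ - lam - η = 0)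
    (heq2₁ : (b ^ 2 / γ₁) * K11₁ * K12₁ + (1 / δ₁) * K12₁ * K22₁ + ρ * K12₁ - lam = 0)
    (heq3₁ : (b ^ 2 / γ₁) * K12₁ ^ 2 + (1 / δ₁) * K22₁ ^ 2 + ρ * K22₁ - lam = 0)
    (hpd₁ : 0 < K11₁ ∧ 0 < K11₁ * K22₁ - K12₁ ^ 2)
    -- (K11₂, K12₂, K22₂) solves the system with parameters (γ₂, δ₂) and is SPD
    (heq1₂ : (b ^ 2 / γ₂) * K11₂ ^ 2 + (1 / δ₂) * K12₂ ^ 2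
      + (ρ - σ ^ 2) * K11₂ - lam - η = 0)
    (heq2₂ : (b ^ 2 / γ₂) * K11₂ * K12₂ + (1 / δ₂) * K12₂ * K22₂ + ρ * K12₂ - lam = 0)
    (heq3₂ : (b ^ 2 / γ₂) * K12₂ ^ 2 + (1 / δ₂) * K22₂ ^ 2 + ρ * K22₂ - lam = 0)
    (hpd₂ : 0 < K11₂ ∧ 0 < K11₂ * K22₂ - K12₂ ^ 2) :
    K11₁ ≤ K11₂ ∧
      ∀ h π θ c : ℝ, 0 ≤ ρ * h + π + θ - ρ * c / b →
        (ρ * h + π + θ - ρ * c / b) / (2 * σ ^ 2 * K11₂) ≤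
          (ρ * h + π + θ - ρ * c / b) / (2 * σ ^ 2 * K11₁) := by
  obtain ⟨hx₁, hdet₁⟩ := hpd₁
  obtain ⟨hx₂, hdet₂⟩ := hpd₂
  have hγ₂ : 0 < γ₂ := lt_of_lt_of_le hγ₁ hγ
  have hδ₂ : 0 < δ₂ := lt_of_lt_of_le hδ₁ hδ
  have ha₂ : 0 < b ^ 2 / γ₂ := by positivity
  have hd₂' : 0 < 1 / δ₂ := by positivity
  have haa : b ^ 2 / γ₂ ≤ b ^ 2 / γ₁ := by gcongr
  have hdd : 1 / δ₂ ≤ 1 / δ₁ := by gcongr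
  have hmain : K11₁ ≤ K11₂ :=
    riccati_mono (b ^ 2 / γ₁) (b ^ 2 / γ₂) (1 / δ₁) (1 / δ₂) ρ (σ ^ 2) lam
      K11₁ K12₁ K22₁ K11₂ K12₂ K22₂ η ha₂ haa hd₂' hdd hρ hρσ hlam
      heq1₁ heq2₁ heq3₁ hx₁ hdet₁ heq1₂ heq2₂ heq3₂ hx₂ hdet₂
  refine ⟨hmain, fun h π θ c hnum => ?_⟩
  have h1 : 0 < 2 * σ ^ 2 * K11₁ := by positivity
  gcongr
end

section
/- For each λ > 0, let (K11(λ), K12(λ), K22(λ)) solve the social planner's Riccati system with penalty parameter λ, with [[K11(λ), K12(λ)],[K12(λ), K22(λ)]] symmetric positive-definite. Then K11(λ) → ∞ as λ → ∞; consequently, for any real constants h, π, θ, c with ρh + π + θ − ρc/b ≥ 0, the stationary distributed generation X*_∞(λ) := (ρh + π + θ − ρc/b)/(2σ²K11(λ)) tends to 0 as λ → ∞. -/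
open Filter

private lemma sq_le_sq_imp {x y : ℝ} (hx : 0 ≤ x) (hy : 0 ≤ y) (h : x ^ 2 ≤ y ^ 2) :
    x ≤ y := by nlinarith

/-- if for each `λ > 0`, `(K11(λ), K12(λ), K22(λ))` solves the
social planner's Riccati system with penalty parameter `λ` and the matrix
`[[K11(λ),K12(λ)],[K12(λ),K22(λ)]]` is symmetric positive-definite, then
`K11(λ) → ∞` as `λ → ∞`; consequently, for constants with
`ρh + π + θ − ρc/b ≥ 0`, the stationary distributed generation
`X*_∞(λ) = (ρh + π + θ − ρc/b)/(2σ²K11(λ))` tends to `0` as `λ → ∞`. -/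
theorem stmt_14 (ρ σ b γ δ η : ℝ) (hρ : 0 < ρ) (hσ : 0 < σ) (hb : 0 < b)
    (hγ : 0 < γ) (hδ : 0 < δ) (hη : 0 < η) (hρσ : σ ^ 2 < ρ)
    (K11 K12 K22 : ℝ → ℝ)
    (hsol : ∀ lam : ℝ, 0 < lam →
      ((b ^ 2 / γ) * (K11 lam) ^ 2 + (1 / δ) * (K12 lam) ^ 2
          + (ρ - σ ^ 2) * K11 lam - lam - η = 0 ∧
        (b ^ 2 / γ) * K11 lam * K12 lam + (1 / δ) * K12 lam * K22 lam
          + ρ * K12 lam - lam = 0 ∧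
        (b ^ 2 / γ) * (K12 lam) ^ 2 + (1 / δ) * (K22 lam) ^ 2
          + ρ * K22 lam - lam = 0) ∧
      0 < K11 lam ∧ 0 < K11 lam * K22 lam - (K12 lam) ^ 2) :
    Tendsto K11 atTop atTop ∧
      ∀ h π θ c : ℝ, 0 ≤ ρ * h + π + θ - ρ * c / b →
        Tendsto (fun lam : ℝ =>
            (ρ * h + π + θ - ρ * c / b) / (2 * σ ^ 2 * K11 lam))
          atTop (nhds 0) := by
  have hK : Tendsto K11 atTop atTop := by
    rw [tendsto_atTop]
    intro M
    set M' := max M 1 with hM'def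
    have hM'1 : (1:ℝ) ≤ M' := le_max_right _ _
    have hM'0 : (0:ℝ) < M' := lt_of_lt_of_le one_pos hM'1
    set C := (b^2/γ)*M'^2 + (ρ - σ^2)*M' with hCdef
    filter_upwards [eventually_ge_atTop (max (max (4*M'^2/δ) (2*C+1)) 1)] with lam hlam
    have hlam1 : (1:ℝ) ≤ lam := le_trans (le_max_right _ _) hlam
    have hlamC : 2*C+1 ≤ lam := le_trans (le_trans (le_max_right _ _) (le_max_left _ _)) hlam
    have hlamM : 4*M'^2/δ ≤ lam :=
      le_trans (le_trans (le_max_left _ _) (le_max_left _ _)) hlam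
    have hlam0 : (0:ℝ) < lam := lt_of_lt_of_le one_pos hlam1
    obtain ⟨⟨e1, e2, e3⟩, hK11p, hdet⟩ := hsol lam hlam0
    refine le_trans (le_max_left M 1) ?_
    by_contra hlt
    push_neg at hlt
    have hbg : 0 < b^2/γ := by positivity
    have hδ' : 0 < (1:ℝ)/δ := by positivity
    have hK22p : 0 < K22 lam := by nlinarith [sq_nonneg (K12 lam)]
    have hK22sq : (K22 lam)^2 ≤ δ * lam := by
      have h1 : (1/δ) * (K22 lam)^2 ≤ lam := by
        nlinarith [mul_nonneg hbg.le (sq_nonneg (K12 lam)), mul_pos hρ hK22p]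
      have := mul_le_mul_of_nonneg_left h1 (le_of_lt hδ)
      field_simp at this
      linarith
    set s := Real.sqrt (δ * lam) with hsdef
    have hs0 : 0 ≤ s := Real.sqrt_nonneg _
    have hssq : s^2 = δ * lam := Real.sq_sqrt (by positivity)
    have hK22s : K22 lam ≤ s :=
      sq_le_sq_imp hK22p.le hs0 (by rw [hssq]; exact hK22sq)
    have hsbig : 2*M' ≤ s := by
      refine sq_le_sq_imp (by positivity) hs0 ?_
      rw [hssq]
      rw [div_le_iff₀ hδ] at hlamM
      calc (2*M')^2 = 4*M'^2 := by ring
        _ ≤ lam * δ := hlamM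
        _ = δ * lam := mul_comm _ _
    have hK12sq : (K12 lam)^2 ≤ M' * s := by
      have h1 : K11 lam * K22 lam ≤ M' * s :=
        mul_le_mul hlt.le hK22s hK22p.le hM'0.le
      linarith
    have hterm : (1/δ) * (M' * s) ≤ lam / 2 := by
      have h2' : 2 * M' * s ≤ s * s := mul_le_mul_of_nonneg_right hsbig hs0
      have hss : s * s = δ * lam := by rw [← sq]; exact hssq
      rw [hss] at h2'
      rw [div_mul_eq_mul_div, div_le_iff₀ hδ]
      linarith
    have h1 : (b^2/γ) * (K11 lam)^2 ≤ (b^2/γ) * M'^2 :=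
      mul_le_mul_of_nonneg_left (pow_le_pow_left₀ hK11p.le hlt.le 2) hbg.le
    have h2 : (ρ - σ^2) * K11 lam ≤ (ρ - σ^2) * M' :=
      mul_le_mul_of_nonneg_left hlt.le (by linarith)
    have h3 : (1/δ) * (K12 lam)^2 ≤ lam / 2 :=
      le_trans (mul_le_mul_of_nonneg_left hK12sq hδ'.le) hterm
    rw [hCdef] at hlamC
    linarith [mul_le_mul_of_nonneg_left hK12sq (le_of_lt hδ'),
      mul_lt_mul_of_pos_left hlt hbg, sq_nonneg (K11 lam),
      mul_pos hbg (mul_pos hK11p hK11p)]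
  refine ⟨hK, fun h π θ c _ => ?_⟩
  have h2 : Tendsto (fun lam => 2*σ^2 * K11 lam) atTop atTop :=
    hK.const_mul_atTop (by positivity)
  exact Tendsto.div_atTop tendsto_const_nhds h2
end

section
/- There is a unique real number P such that X̂_∞(P) = X*_∞, namely the asymptotic Pareto optimum price P* := (1 − K_c/K11)·(ρc/b − θ) + (K_c/K11)·(ρh + π). Moreover, if the grid-parity condition ρc/b − θ ≤ ρh + π holds, then ρc/b − θ ≤ P* ≤ ρh + π. -/
theorem sub_div_mul_eq_sub_div_mul_iff {𝕜 : Type*} [Field 𝕜] {a b p d k K : 𝕜}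
    (hd : d ≠ 0) (hk : k ≠ 0) (hK : K ≠ 0) :
    (p - a) / (d * k) = (b - a) / (d * K) ↔ p = (1 - k / K) * a + k / K * b := by
  rw [div_eq_div_iff (mul_ne_zero hd hk) (mul_ne_zero hd hK)]
  constructor
  · intro h
    have h' : (p - a) * K = (b - a) * k := mul_left_cancel₀ hd (by linear_combination h)
    field_simp
    linear_combination h'
  · intro h
    rw [h]
    field_simp
    ring

theorem one_sub_mul_add_mul_mem_Icc {a b t : ℝ} (hab : a ≤ b) (ht₀ : 0 ≤ t) (ht₁ : t ≤ 1) :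
    (1 - t) * a + t * b ∈ Set.Icc a b :=
  convex_Icc a b (Set.left_mem_Icc.2 hab) (Set.right_mem_Icc.2 hab) (sub_nonneg.2 ht₁) ht₀
    (sub_add_cancel 1 t)

theorem stmt_15_general (ρ σ b : ℝ) (hσ : 0 < σ)
    (θ c h π : ℝ) (Kc K11 : ℝ) (hKc : 0 < Kc) (hKcK11 : Kc ≤ K11)
    (Xhat : ℝ → ℝ) (hXhat : ∀ P : ℝ, Xhat P = (P + θ - ρ * c / b) / (2 * σ ^ 2 * Kc))
    (Xstar : ℝ) (hXstar : Xstar = (ρ * h + π + θ - ρ * c / b) / (2 * σ ^ 2 * K11))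
    (Pstar : ℝ)
    (hPstar : Pstar = (1 - Kc / K11) * (ρ * c / b - θ) + (Kc / K11) * (ρ * h + π)) :
    Xhat Pstar = Xstar ∧
      (∀ P : ℝ, Xhat P = Xstar → P = Pstar) ∧
      (ρ * c / b - θ ≤ ρ * h + π →
        ρ * c / b - θ ≤ Pstar ∧ Pstar ≤ ρ * h + π) := by
  have hK11 : 0 < K11 := hKc.trans_le hKcK11
  have hXhat_eq_iff : ∀ P, Xhat P = Xstar ↔ P = Pstar := fun P => by
    rw [hXhat, hXstar, hPstar, ← sub_sub_eq_add_sub, ← sub_sub_eq_add_sub (ρ * h + π)]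
    exact sub_div_mul_eq_sub_div_mul_iff (by positivity) hKc.ne' hK11.ne'
  refine ⟨(hXhat_eq_iff Pstar).2 rfl, fun P => (hXhat_eq_iff P).1, fun hparity => ?_⟩
  rw [hPstar]
  exact one_sub_mul_add_mul_mem_Icc hparity (div_nonneg hKc.le hK11.le)
    ((div_le_one hK11).2 hKcK11)

/-- Proposition 4.1, asymptotic Pareto optimum price: with
`X̂_∞(P) = (P + θ − ρc/b)/(2σ²K_c)` and `X*_∞ = (ρh + π + θ − ρc/b)/(2σ²K11)`,
the price `P* = (1 − K_c/K11)·(ρc/b − θ) + (K_c/K11)·(ρh + π)` is the unique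
real number with `X̂_∞(P*) = X*_∞`; moreover under grid parity
`ρc/b − θ ≤ ρh + π` one has `ρc/b − θ ≤ P* ≤ ρh + π`. -/
theorem stmt_15 (ρ σ b : ℝ) (hρ : 0 < ρ) (hσ : 0 < σ) (hb : 0 < b)
    (θ c h π : ℝ) (Kc K11 : ℝ) (hKc : 0 < Kc) (hKcK11 : Kc ≤ K11)
    (Xhat : ℝ → ℝ) (hXhat : ∀ P : ℝ, Xhat P = (P + θ - ρ * c / b) / (2 * σ ^ 2 * Kc))
    (Xstar : ℝ) (hXstar : Xstar = (ρ * h + π + θ - ρ * c / b) / (2 * σ ^ 2 * K11))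
    (Pstar : ℝ)
    (hPstar : Pstar = (1 - Kc / K11) * (ρ * c / b - θ) + (Kc / K11) * (ρ * h + π)) :
    Xhat Pstar = Xstar ∧
      (∀ P : ℝ, Xhat P = Xstar → P = Pstar) ∧
      (ρ * c / b - θ ≤ ρ * h + π →
        ρ * c / b - θ ≤ Pstar ∧ Pstar ≤ ρ * h + π) :=
  stmt_15_general ρ σ b hσ θ c h π Kc K11 hKc hKcK11 Xhat hXhat Xstar hXstar Pstar hPstar
end

section
/- The function P ↦ V_q(P) is a quadratic polynomial in P with strictly positive leading coefficient, and it attains its global minimum at the unique point P^⋄(q) := (1 − 1/ξ)·P_D + (1/ξ)·P_F(q); that is, for every real P ≠ P^⋄(q) one has V_q(P) > V_q(P^⋄(q)). -/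
/-!
Since `P = P_D − 2σ²K_c·H(P)`, the objective is a quadratic in the residual demand `H`,
`V_q = (1/ρ)·(ξσ²K_c·H² − (P_D − P_F)·H) + const`; this is where `ξ`, `P_D` and `P_F` come from.
Substituting `H = (P_D − P)/(2σ²K_c)` and completing the square gives
`V_q(P) = ξ/(4ρσ²K_c)·(P − P⋄)² + const`. Finally `ξ > 0`: `K_f` is the positive root of
`K² + ρδK = λδ`, so `1 − λδ/(ρδ + K_f)² = ρδ/(ρδ + K_f) > 0`.
-/

theorem neg_add_sqrt_sq_add_pos (a : ℝ) {c : ℝ} (hc : 0 < c) : 0 < -a + √(a ^ 2 + c) := by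
  have : a < √(a ^ 2 + c) :=
    calc a ≤ |a| := le_abs_self a
      _ = √(a ^ 2) := (Real.sqrt_sq_eq_abs a).symm
      _ < √(a ^ 2 + c) := Real.sqrt_lt_sqrt (sq_nonneg a) (by linarith)
  linarith

theorem sq_add_mul_eq_of_eq_half_mul_neg_add_sqrt {ρ δ lam K : ℝ} (hδ : 0 < δ) (hlam : 0 < lam)
    (hK : K = (δ / 2) * (-ρ + √(ρ ^ 2 + 4 * lam / δ))) :
    K ^ 2 + ρ * δ * K = lam * δ := by
  have hsq : √(ρ ^ 2 + 4 * lam / δ) ^ 2 = ρ ^ 2 + 4 * lam / δ := Real.sq_sqrt (by positivity)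
  rw [hK]
  linear_combination (norm := skip) (δ ^ 2 / 4) * hsq
  field_simp
  ring

theorem one_sub_div_sq_eq_of_sq_add_mul_eq {ρ δ lam K : ℝ} (hK : K ^ 2 + ρ * δ * K = lam * δ)
    (hR : ρ * δ + K ≠ 0) :
    1 - lam * δ / (ρ * δ + K) ^ 2 = ρ * δ / (ρ * δ + K) := by
  rw [one_sub_div (pow_ne_zero 2 hR), div_eq_div_iff (pow_ne_zero 2 hR) hR]
  linear_combination (ρ * δ + K) * hK

theorem residual_quadratic_eq_vertex_form {ρ s ξ d f x : ℝ} (hs : s ≠ 0) (hξ : ξ ≠ 0) :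
    (1 / ρ) * (ξ * s * ((d - x) / (2 * s)) ^ 2 - (d - f) * ((d - x) / (2 * s)))
      = ξ / (4 * ρ * s) * (x - ((1 - 1 / ξ) * d + (1 / ξ) * f)) ^ 2
        - (d - f) ^ 2 / (4 * ρ * s * ξ) := by
  field_simp
  ring

theorem objective_eq_residual_form {ρ σ δ lam Kc Kf h π q PD PF ξ u P Y : ℝ}
    (hρ : ρ ≠ 0) (hσ : σ ≠ 0) (hδ : δ ≠ 0) (hKc : Kc ≠ 0) (hR : ρ * δ + Kf ≠ 0)
    (hP : P = PD - 2 * σ ^ 2 * Kc * u)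
    (hY : Y = -(2 * lam * δ / (ρ * δ + Kf)) * u + (δ * π - Kf * h) / (ρ * δ + Kf))
    (hξ : ξ = 2 + (lam / (σ ^ 2 * Kc)) * (1 - lam * δ / (ρ * δ + Kf) ^ 2))
    (hPF : PF = (lam * δ / (ρ * δ + Kf)) * ((ρ * h + π) / (ρ * δ + Kf) - 2 * ρ * q)) :
    (1 / ρ) * (lam * u ^ 2 - P * u)
        - (1 / (4 * δ * ρ)) * (Y + h) ^ 2 + Y * q + Kf * q ^ 2
      = (1 / ρ) * (ξ * (σ ^ 2 * Kc) * u ^ 2 - (PD - PF) * u)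
        - (1 / (4 * δ * ρ)) * (δ * (π + ρ * h) / (ρ * δ + Kf)) ^ 2
        + (δ * π - Kf * h) / (ρ * δ + Kf) * q + Kf * q ^ 2 := by
  subst hP hY hξ hPF
  field_simp
  ring

theorem exists_objective_eq_vertex_form {ρ σ b δ lam θ c h π D q Kc Kf : ℝ} {H Y₀ V : ℝ → ℝ}
    {ξ PD PF Pdia : ℝ} (hρ : ρ ≠ 0) (hσ : σ ≠ 0) (hδ : δ ≠ 0) (hKc : Kc ≠ 0)
    (hR : ρ * δ + Kf ≠ 0) (hξ0 : ξ ≠ 0)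
    (hH : ∀ P : ℝ, H P = D - (P + θ - ρ * c / b) / (2 * σ ^ 2 * Kc))
    (hY₀ : ∀ P : ℝ, Y₀ P =
      -(2 * lam * δ / (ρ * δ + Kf)) * H P + (δ * π - Kf * h) / (ρ * δ + Kf))
    (hV : ∀ P : ℝ, V P = (1 / ρ) * (lam * (H P) ^ 2 - P * H P)
      - (1 / (4 * δ * ρ)) * (Y₀ P + h) ^ 2 + Y₀ P * q + Kf * q ^ 2)
    (hξ : ξ = 2 + (lam / (σ ^ 2 * Kc)) * (1 - lam * δ / (ρ * δ + Kf) ^ 2))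
    (hPD : PD = (ρ * c / b - θ) + 2 * σ ^ 2 * Kc * D)
    (hPF : PF = (lam * δ / (ρ * δ + Kf)) * ((ρ * h + π) / (ρ * δ + Kf) - 2 * ρ * q))
    (hPdia : Pdia = (1 - 1 / ξ) * PD + (1 / ξ) * PF) :
    ∃ C, ∀ P, V P = ξ / (4 * ρ * (σ ^ 2 * Kc)) * (P - Pdia) ^ 2 + C := by
  refine ⟨-(PD - PF) ^ 2 / (4 * ρ * (σ ^ 2 * Kc) * ξ)
    - (1 / (4 * δ * ρ)) * (δ * (π + ρ * h) / (ρ * δ + Kf)) ^ 2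
    + (δ * π - Kf * h) / (ρ * δ + Kf) * q + Kf * q ^ 2, fun P => ?_⟩
  have hu : H P = (PD - P) / (2 * (σ ^ 2 * Kc)) := by
    rw [hH, hPD]
    field_simp
    ring
  have hP : P = PD - 2 * σ ^ 2 * Kc * H P := by
    rw [hu]
    field_simp
    ring
  rw [hV, objective_eq_residual_form hρ hσ hδ hKc hR hP (hY₀ P) hξ hPF, hu,
    residual_quadratic_eq_vertex_form (by positivity) hξ0, hPdia]
  ring

theorem stmt_17_general (ρ σ b γ δ lam η : ℝ) (hρ : 0 < ρ) (hσ : 0 < σ) (hb : 0 < b)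
    (hγ : 0 < γ) (hδ : 0 < δ) (hlam : 0 < lam) (hη : 0 < η)
    (θ c h π D q : ℝ)
    (Kc Kf : ℝ)
    (hKc : Kc = (γ / (2 * b ^ 2)) *
      (-(ρ - σ ^ 2) + Real.sqrt ((ρ - σ ^ 2) ^ 2 + 4 * b ^ 2 * η / γ)))
    (hKf : Kf = (δ / 2) * (-ρ + Real.sqrt (ρ ^ 2 + 4 * lam / δ)))
    (H Y₀ V : ℝ → ℝ)
    (hH : ∀ P : ℝ, H P = D - (P + θ - ρ * c / b) / (2 * σ ^ 2 * Kc))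
    (hY₀ : ∀ P : ℝ, Y₀ P =
      -(2 * lam * δ / (ρ * δ + Kf)) * H P + (δ * π - Kf * h) / (ρ * δ + Kf))
    (hV : ∀ P : ℝ, V P = (1 / ρ) * (lam * (H P) ^ 2 - P * H P)
      - (1 / (4 * δ * ρ)) * (Y₀ P + h) ^ 2 + Y₀ P * q + Kf * q ^ 2)
    (ξ PD PF Pdia : ℝ)
    (hξ : ξ = 2 + (lam / (σ ^ 2 * Kc)) * (1 - lam * δ / (ρ * δ + Kf) ^ 2))
    (hPD : PD = (ρ * c / b - θ) + 2 * σ ^ 2 * Kc * D)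
    (hPF : PF = (lam * δ / (ρ * δ + Kf)) * ((ρ * h + π) / (ρ * δ + Kf) - 2 * ρ * q))
    (hPdia : Pdia = (1 - 1 / ξ) * PD + (1 / ξ) * PF) :
    (∃ A B C : ℝ, 0 < A ∧ ∀ P : ℝ, V P = A * P ^ 2 + B * P + C) ∧
      ∀ P : ℝ, P ≠ Pdia → V Pdia < V P := by
  have hKc0 : 0 < Kc := hKc ▸ mul_pos (by positivity) (neg_add_sqrt_sq_add_pos _ (by positivity))
  have hKf0 : 0 < Kf := hKf ▸ mul_pos (by positivity) (neg_add_sqrt_sq_add_pos _ (by positivity))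
  have hR : 0 < ρ * δ + Kf := by positivity
  have hξ0 : 0 < ξ := by
    rw [hξ, one_sub_div_sq_eq_of_sq_add_mul_eq
      (sq_add_mul_eq_of_eq_half_mul_neg_add_sqrt hδ hlam hKf) hR.ne']
    positivity
  obtain ⟨C, hvertex⟩ := exists_objective_eq_vertex_form hρ.ne' hσ.ne' hδ.ne' hKc0.ne' hR.ne'
    hξ0.ne' hH hY₀ hV hξ hPD hPF hPdia
  set A := ξ / (4 * ρ * (σ ^ 2 * Kc))
  have hA : 0 < A := by positivity
  refine ⟨⟨A, -2 * A * Pdia, A * Pdia ^ 2 + C, hA, fun P => by rw [hvertex]; ring⟩,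
    fun P hP => ?_⟩
  have : P - Pdia ≠ 0 := sub_ne_zero.mpr hP
  rw [hvertex P, hvertex Pdia, sub_self, zero_pow two_ne_zero, mul_zero, zero_add]
  exact lt_add_of_pos_left _ (by positivity)

/-- Proposition 4.2: the firm's stationary Stackelberg objective
`V_q(P) = (1/ρ)·(λH(P)² − P·H(P)) − (1/(4δρ))·(Y₀(P) + h)² + Y₀(P)·q + K_f·q²`
is a quadratic polynomial in `P` with strictly positive leading coefficient,
attaining its global minimum at the unique point
`P⋄(q) = (1 − 1/ξ)·P_D + (1/ξ)·P_F(q)`. -/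
theorem stmt_17 (ρ σ b γ δ lam η : ℝ) (hρ : 0 < ρ) (hσ : 0 < σ) (hb : 0 < b)
    (hγ : 0 < γ) (hδ : 0 < δ) (hlam : 0 < lam) (hη : 0 < η) (hρσ : σ ^ 2 < ρ)
    (θ c h π D q : ℝ)
    (Kc Kf : ℝ)
    (hKc : Kc = (γ / (2 * b ^ 2)) *
      (-(ρ - σ ^ 2) + Real.sqrt ((ρ - σ ^ 2) ^ 2 + 4 * b ^ 2 * η / γ)))
    (hKf : Kf = (δ / 2) * (-ρ + Real.sqrt (ρ ^ 2 + 4 * lam / δ)))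
    (H Y₀ V : ℝ → ℝ)
    (hH : ∀ P : ℝ, H P = D - (P + θ - ρ * c / b) / (2 * σ ^ 2 * Kc))
    (hY₀ : ∀ P : ℝ, Y₀ P =
      -(2 * lam * δ / (ρ * δ + Kf)) * H P + (δ * π - Kf * h) / (ρ * δ + Kf))
    (hV : ∀ P : ℝ, V P = (1 / ρ) * (lam * (H P) ^ 2 - P * H P)
      - (1 / (4 * δ * ρ)) * (Y₀ P + h) ^ 2 + Y₀ P * q + Kf * q ^ 2)
    (ξ PD PF Pdia : ℝ)
    (hξ : ξ = 2 + (lam / (σ ^ 2 * Kc)) * (1 - lam * δ / (ρ * δ + Kf) ^ 2))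
    (hPD : PD = (ρ * c / b - θ) + 2 * σ ^ 2 * Kc * D)
    (hPF : PF = (lam * δ / (ρ * δ + Kf)) * ((ρ * h + π) / (ρ * δ + Kf) - 2 * ρ * q))
    (hPdia : Pdia = (1 - 1 / ξ) * PD + (1 / ξ) * PF) :
    (∃ A B C : ℝ, 0 < A ∧ ∀ P : ℝ, V P = A * P ^ 2 + B * P + C) ∧
      ∀ P : ℝ, P ≠ Pdia → V Pdia < V P :=
  stmt_17_general ρ σ b γ δ lam η hρ hσ hb hγ hδ hlam hη θ c h π D q Kc Kf hKc hKf H Y₀ V hH hY₀ hV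
    ξ PD PF Pdia hξ hPD hPF hPdia
end
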